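/- arXiv:2311.11119 — 12 statements merged into one kernel-verified Lean document; each statement's English description precedes it below -/
import Mathlib

section
/- Let m be a positive integer and ε ∈ (0,1] be such that s := √m/ε is a positive integer, and let L := ⌊0.1·2^s⌋. Draw T = (T_1,…,T_L) from Talagrand(m,ε). Then for every x ∈ {0,1}^m with Hamming weight |x| ≤ m/2 + 0.05·ε·√m, the expected number of terms of T satisfied by x satisfies E_T[|S_T(x)|] < 0.12. -/
open Finset

set_option maxHeartbeats 1000000

/-- Sum over all functions of something depending only on one coordinate. -/
lemma sum_eval_aux {ι α : Type*} [Fintype ι] [DecidableEq ι] [Fintype α] (ℓ : ι)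
    (f : α → ℝ) :
    ∑ T : ι → α, f (T ℓ) =
      ((Fintype.card α : ℝ) ^ (Fintype.card ι - 1)) * ∑ a : α, f a := by
  have h := Fintype.sum_equiv (Equiv.funSplitAt ℓ α)
    (fun T : ι → α => f (T ℓ)) (fun p : α × ({ j // j ≠ ℓ } → α) => f p.1)
    (fun T => rfl)
  rw [h, Fintype.sum_prod_type]
  have hcard : Fintype.card { j : ι // j ≠ ℓ } = Fintype.card ι - 1 := by
    rw [Fintype.card_subtype_compl, Fintype.card_subtype_eq]
  simp only [Finset.sum_const, Finset.card_univ, hcard, nsmul_eq_mul,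
    Fintype.card_fun]
  push_cast
  rw [← Finset.mul_sum]

lemma exp_point_one_lt : Real.exp 0.1 < 1.2 := by
  by_contra h
  push_neg at h
  have h10 : Real.exp 0.1 ^ 10 = Real.exp 1 := by
    rw [← Real.exp_nat_mul]; norm_num
  have : (1.2:ℝ)^10 ≤ Real.exp 0.1 ^ 10 := pow_le_pow_left₀ (by norm_num) h 10
  rw [h10] at this
  have := Real.exp_one_lt_d9
  norm_num at *
  linarith

/-- Talagrand's random DNF with parameters `m`, `ε`, where `s = √m/ε`
is a positive integer and `L = ⌊0.1·2^s⌋`.  A draw `T` is a function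
`Fin L → Fin s → Fin m` giving, for each term, the `s` indices drawn with replacement;
term `ℓ` is satisfied by `x` iff `x (T ℓ j) = true` for all `j`.  For every
`x ∈ {0,1}^m` with Hamming weight `|x| ≤ m/2 + 0.05·ε·√m`, the expected number of
terms satisfied by `x` is `< 0.12`. -/
theorem talagrand_expected_sat_terms (m s L : ℕ) (ε : ℝ)
    (hm : 0 < m) (hε0 : 0 < ε) (hε1 : ε ≤ 1)
    (hs : 0 < s) (hsval : (s : ℝ) = Real.sqrt m / ε)
    (hL : L = ⌊(0.1 : ℝ) * 2 ^ s⌋₊)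
    (x : Fin m → Bool)
    (hx : (((Finset.univ.filter (fun i => x i = true)).card : ℝ)) ≤
      (m : ℝ) / 2 + 0.05 * ε * Real.sqrt m) :
    (∑ T : Fin L → Fin s → Fin m,
        ((Finset.univ.filter (fun ℓ : Fin L => ∀ j, x (T ℓ j) = true)).card : ℝ)) /
      ((Fintype.card (Fin L → Fin s → Fin m) : ℝ)) < 0.12 := by
  set k := (Finset.univ.filter (fun i => x i = true)).card with hk
  rcases Nat.eq_zero_or_pos L with hL0 | hL1
  · subst hL0
    simp
    norm_num
  -- rewrite numerator
  have hnum : (∑ T : Fin L → Fin s → Fin m,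
      ((Finset.univ.filter (fun ℓ : Fin L => ∀ j, x (T ℓ j) = true)).card : ℝ))
      = ((m:ℝ)^s)^(L-1) * ((L : ℝ) * (k:ℝ)^s) := by
    have step1 : ∀ T : Fin L → Fin s → Fin m,
        ((Finset.univ.filter (fun ℓ : Fin L => ∀ j, x (T ℓ j) = true)).card : ℝ)
        = ∑ ℓ : Fin L, (if ∀ j, x (T ℓ j) = true then (1:ℝ) else 0) := by
      intro T
      rw [Finset.card_filter]
      push_cast
      rfl
    simp only [step1]
    rw [Finset.sum_comm]
    have step2 : ∀ ℓ : Fin L,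
        (∑ T : Fin L → Fin s → Fin m, (if ∀ j, x (T ℓ j) = true then (1:ℝ) else 0))
        = ((m:ℝ)^s)^(L-1) * (k:ℝ)^s := by
      intro ℓ
      have := sum_eval_aux (ι := Fin L) (α := Fin s → Fin m) ℓ
        (fun a => if ∀ j, x (a j) = true then (1:ℝ) else 0)
      rw [this]
      have hS : (∑ a : Fin s → Fin m, (if ∀ j, x (a j) = true then (1:ℝ) else 0))
          = (k:ℝ)^s := by
        rw [Finset.sum_boole]
        have hfe : (Finset.univ.filter (fun a : Fin s → Fin m => ∀ j, x (a j) = true))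
            = Fintype.piFinset (fun _ : Fin s => Finset.univ.filter (fun i => x i = true)) := by
          ext a
          simp [Fintype.mem_piFinset]
        rw [hfe, Fintype.card_piFinset]
        push_cast
        simp
        rfl
      rw [hS]
      congr 1
      simp [Fintype.card_fun]
    simp only [step2]
    rw [Finset.sum_const]
    simp only [Finset.card_univ, Fintype.card_fin, nsmul_eq_mul]
    ring
  -- denominator
  have hden : ((Fintype.card (Fin L → Fin s → Fin m) : ℝ))
      = ((m:ℝ)^s)^(L-1) * ((m:ℝ)^s) := by
    rw [Fintype.card_fun, Fintype.card_fun]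
    push_cast
    rw [Fintype.card_fin, Fintype.card_fin, Fintype.card_fin]
    rw [← pow_succ, Nat.sub_add_cancel hL1]
  rw [hnum, hden]
  have hmpos : (0:ℝ) < (m:ℝ) := by exact_mod_cast hm
  have hms : (0:ℝ) < ((m:ℝ)^s)^(L-1) := by positivity
  rw [mul_div_mul_left _ _ hms.ne']
  -- now show L * k^s / m^s < 0.12
  have hspos : (0:ℝ) < (s:ℝ) := by exact_mod_cast hs
  -- ε * sqrt m = m / s
  have hsq : Real.sqrt m * Real.sqrt m = m := Real.mul_self_sqrt (by positivity)
  have hse : (s:ℝ) * ε = Real.sqrt m := by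
    rw [hsval]; field_simp
  have hεm : ε * Real.sqrt m = (m:ℝ) / s := by
    rw [eq_div_iff hspos.ne']
    nlinarith [hse, hsq]
  have hkm : (k:ℝ) / m ≤ 1/2 + 0.05 / s := by
    rw [div_le_iff₀ hmpos]
    have : (1/2 + 0.05/s) * m = m/2 + 0.05 * ((m:ℝ)/s) := by
      field_simp
    rw [this, ← hεm]
    calc (k:ℝ) ≤ (m:ℝ)/2 + 0.05 * ε * Real.sqrt m := hx
      _ = m/2 + 0.05 * (ε * Real.sqrt m) := by ring
  have hknn : (0:ℝ) ≤ (k:ℝ)/m := by positivity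
  have hpow : (k:ℝ)^s / (m:ℝ)^s ≤ (1/2 + 0.05/s)^s := by
    rw [← div_pow]
    exact pow_le_pow_left₀ hknn hkm s
  have hLle : (L:ℝ) ≤ 0.1 * 2^s := by
    have h0 : (0:ℝ) ≤ (0.1:ℝ) * 2^s := by positivity
    rw [hL]
    exact Nat.floor_le h0
  have hLnn : (0:ℝ) ≤ (L:ℝ) := by positivity
  have hmain : (L:ℝ) * ((k:ℝ)^s / (m:ℝ)^s) ≤ (0.1 * 2^s) * (1/2 + 0.05/s)^s := by
    apply mul_le_mul hLle hpow (by positivity) (by positivity)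
  have heq : (0.1 * 2^s) * ((1:ℝ)/2 + 0.05/s)^s = 0.1 * (1 + 0.1/s)^s := by
    have : ((1:ℝ) + 0.1/s) = 2 * (1/2 + 0.05/s) := by ring
    rw [this, mul_pow]
    ring
  have hexp : ((1:ℝ) + 0.1/s)^s ≤ Real.exp 0.1 := by
    have h1 : (1:ℝ) + 0.1/s ≤ Real.exp (0.1/s) := by
      have := Real.add_one_le_exp ((0.1:ℝ)/s)
      linarith
    calc ((1:ℝ) + 0.1/s)^s ≤ (Real.exp (0.1/s))^s :=
          pow_le_pow_left₀ (by positivity) h1 s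
      _ = Real.exp ((s:ℝ) * (0.1/s)) := by rw [← Real.exp_nat_mul]
      _ = Real.exp 0.1 := by rw [mul_div_cancel₀ _ hspos.ne']
  have hfin : (L:ℝ) * ((k:ℝ)^s) / (m:ℝ)^s < 0.12 := by
    have h1 : (L:ℝ) * ((k:ℝ)^s) / (m:ℝ)^s = (L:ℝ) * ((k:ℝ)^s / (m:ℝ)^s) := by ring
    rw [h1]
    calc (L:ℝ) * ((k:ℝ)^s / (m:ℝ)^s) ≤ (0.1 * 2^s) * (1/2 + 0.05/s)^s := hmain
      _ = 0.1 * (1 + 0.1/s)^s := heq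
      _ ≤ 0.1 * Real.exp 0.1 := by nlinarith [hexp]
      _ < 0.1 * 1.2 := by nlinarith [exp_point_one_lt]
      _ ≤ 0.12 := by norm_num
  exact hfin
end

section
/- Let m be a positive integer and ε ∈ (0,1] be such that s := √m/ε is an integer with s ≥ 8, and let L := ⌊0.1·2^s⌋. Draw T = (T_1,…,T_L) from Talagrand(m,ε). Then for every x ∈ {0,1}^m with Hamming weight |x| satisfying m/2 ≤ |x| ≤ m/2 + 0.05·ε·√m, the probability that x satisfies exactly one term of T is greater than 0.03, i.e. Pr_T[|S_T(x)| = 1] > 0.03. -/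
lemma card_filter_forall_mem' {n : ℕ} {α : Type*} [Fintype α] [DecidableEq α] (B : Fin n → Finset α) :
    (Finset.univ.filter (fun T : Fin n → α => ∀ ℓ, T ℓ ∈ B ℓ)).card = ∏ ℓ, (B ℓ).card := by
  have h : Finset.univ.filter (fun T : Fin n → α => ∀ ℓ, T ℓ ∈ B ℓ) = Fintype.piFinset B := by
    ext f; simp [Fintype.mem_piFinset]
  rw [h, Fintype.card_piFinset]

lemma card_exactly_one' {n : ℕ} {α : Type*} [Fintype α] [DecidableEq α] (A : Finset α) :
    (Finset.univ.filter (fun T : Fin n → α =>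
        (Finset.univ.filter (fun ℓ : Fin n => T ℓ ∈ A)).card = 1)).card
      = n * (A.card * Aᶜ.card ^ (n - 1)) := by
  have hE : Finset.univ.filter (fun T : Fin n → α =>
        (Finset.univ.filter (fun ℓ : Fin n => T ℓ ∈ A)).card = 1)
      = Finset.univ.biUnion (fun ℓ₀ : Fin n =>
          Finset.univ.filter (fun T : Fin n → α => ∀ ℓ, T ℓ ∈ (if ℓ = ℓ₀ then A else Aᶜ))) := by
    ext T
    simp only [Finset.mem_biUnion, Finset.mem_filter, Finset.mem_univ, true_and]
    constructor
    · intro h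
      obtain ⟨ℓ₀, hℓ₀⟩ := Finset.card_eq_one.mp h
      refine ⟨ℓ₀, fun ℓ => ?_⟩
      by_cases hℓ : ℓ = ℓ₀
      · subst hℓ
        have : ℓ ∈ Finset.univ.filter (fun ℓ : Fin n => T ℓ ∈ A) := by
          rw [hℓ₀]; exact Finset.mem_singleton_self ℓ
        simpa using this
      · rw [if_neg hℓ, Finset.mem_compl]
        intro hmem
        have : ℓ ∈ Finset.univ.filter (fun ℓ : Fin n => T ℓ ∈ A) := by
          simp [hmem]
        rw [hℓ₀, Finset.mem_singleton] at this
        exact hℓ this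
    · rintro ⟨ℓ₀, h⟩
      rw [Finset.card_eq_one]
      refine ⟨ℓ₀, ?_⟩
      ext ℓ
      simp only [Finset.mem_filter, Finset.mem_univ, true_and, Finset.mem_singleton]
      constructor
      · intro hmem
        by_contra hℓ
        have := h ℓ
        rw [if_neg hℓ, Finset.mem_compl] at this
        exact this hmem
      · intro hℓ; subst hℓ; have := h ℓ; rwa [if_pos rfl] at this
  rw [hE, Finset.card_biUnion]
  · have hcard : ∀ ℓ₀ : Fin n,
        (Finset.univ.filter (fun T : Fin n → α => ∀ ℓ, T ℓ ∈ (if ℓ = ℓ₀ then A else Aᶜ))).card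
          = A.card * Aᶜ.card ^ (n - 1) := by
      intro ℓ₀
      rw [card_filter_forall_mem']
      rw [← Finset.mul_prod_erase _ _ (Finset.mem_univ ℓ₀), if_pos rfl]
      congr 1
      rw [Finset.prod_congr rfl (fun ℓ hℓ => by rw [if_neg (Finset.ne_of_mem_erase hℓ)]),
        Finset.prod_const, Finset.card_erase_of_mem (Finset.mem_univ ℓ₀), Finset.card_univ,
        Fintype.card_fin]
    rw [Finset.sum_congr rfl (fun ℓ₀ _ => hcard ℓ₀), Finset.sum_const, Finset.card_univ,
      Fintype.card_fin, smul_eq_mul]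
  · intro ℓ₀ _ ℓ₁ _ hne
    simp only [Finset.disjoint_left, Finset.mem_filter, Finset.mem_univ, true_and]
    intro T h0 h1
    have ha := h0 ℓ₀
    have hb := h1 ℓ₀
    rw [if_pos rfl] at ha
    rw [if_neg hne, Finset.mem_compl] at hb
    exact hb ha

set_option maxHeartbeats 2000000 in
theorem talagrand_unique_sat_term (m s L : ℕ) (ε : ℝ)
    (hm : 0 < m) (hε0 : 0 < ε) (hε1 : ε ≤ 1)
    (hs : 8 ≤ s) (hsval : (s : ℝ) = Real.sqrt m / ε)
    (hL : L = ⌊(0.1 : ℝ) * 2 ^ s⌋₊)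
    (x : Fin m → Bool)
    (hxlo : (m : ℝ) / 2 ≤ ((Finset.univ.filter (fun i => x i = true)).card : ℝ))
    (hxhi : ((Finset.univ.filter (fun i => x i = true)).card : ℝ) ≤
      (m : ℝ) / 2 + 0.05 * ε * Real.sqrt m) :
    0.03 <
      ((Finset.univ.filter (fun T : Fin L → Fin s → Fin m =>
          (Finset.univ.filter (fun ℓ : Fin L => ∀ j, x (T ℓ j) = true)).card = 1)).card : ℝ) /
        ((Fintype.card (Fin L → Fin s → Fin m) : ℝ)) := by
  set k := (Finset.univ.filter (fun i => x i = true)).card with hk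
  -- basic facts
  have hs0 : 0 < s := by omega
  have hsR : (0:ℝ) < s := by exact_mod_cast hs0
  have hmR : (0:ℝ) < m := by exact_mod_cast hm
  have hsqrt : Real.sqrt m = s * ε := by rw [hsval]; field_simp
  have hmm : Real.sqrt m * Real.sqrt m = m := Real.mul_self_sqrt (by positivity)
  have key : ε * Real.sqrt m = m / s := by
    rw [hsqrt] at hmm ⊢
    field_simp
    nlinarith [hmm]
  have hks : (k:ℝ) ≤ m/2 + 0.05 * ((m:ℝ)/s) := by
    have h : (0.05:ℝ) * ε * Real.sqrt m = 0.05 * (m/s) := by rw [mul_assoc, key]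
    rw [h] at hxhi; linarith
  -- p and its bounds
  set p : ℝ := ((k:ℝ)/m)^s with hp
  have hkm_div_lo : (1/2 : ℝ) ≤ (k:ℝ)/m := by
    rw [le_div_iff₀ hmR]; linarith
  have hkm_div_hi : (k:ℝ)/m ≤ (1/2) * (1 + 0.1/s) := by
    rw [div_le_iff₀ hmR]
    have : (1/2 : ℝ) * (1 + 0.1/s) * m = m/2 + 0.05 * ((m:ℝ)/s) := by ring
    rw [this]; exact hks
  have hp_lo : (1/2:ℝ)^s ≤ p := pow_le_pow_left₀ (by norm_num) hkm_div_lo s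
  have hexp : Real.exp 0.1 ≤ 10/9 := by
    have h1 := Real.add_one_le_exp (-0.1)
    have h2 := Real.exp_pos (0.1:ℝ)
    rw [Real.exp_neg] at h1
    rw [show (-0.1 + 1 : ℝ) = 0.9 by norm_num] at h1
    have h3 : (0.9:ℝ) * Real.exp 0.1 ≤ 1 := by
      have h4 := mul_le_mul_of_nonneg_right h1 h2.le
      rwa [inv_mul_cancel₀ (ne_of_gt h2)] at h4
    linarith
  have hpow_exp : ((1:ℝ) + 0.1/s)^s ≤ 10/9 := by
    have h1 : ((1:ℝ) + 0.1/s) ≤ Real.exp (0.1/s) := by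
      have := Real.add_one_le_exp ((0.1:ℝ)/s); linarith
    have h2 : ((1:ℝ) + 0.1/s)^s ≤ (Real.exp (0.1/s))^s :=
      pow_le_pow_left₀ (by positivity) h1 s
    have h3 : (Real.exp ((0.1:ℝ)/s))^s = Real.exp 0.1 := by
      rw [← Real.exp_nat_mul]
      congr 1
      field_simp
    rw [h3] at h2
    linarith
  have hp_hi : p ≤ (10/9) * (1/2:ℝ)^s := by
    have h1 : p ≤ ((1/2) * (1 + 0.1/s))^s :=
      pow_le_pow_left₀ (le_trans (by norm_num) hkm_div_lo) hkm_div_hi s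
    rw [mul_pow] at h1
    have h2 : ((1:ℝ) + 0.1/s)^s ≤ 10/9 := hpow_exp
    have h3 : (0:ℝ) ≤ (1/2:ℝ)^s := by positivity
    nlinarith
  -- L bounds
  have h2s : (256:ℝ) ≤ 2^s := by
    calc (256:ℝ) = 2^8 := by norm_num
    _ ≤ 2^s := pow_le_pow_right₀ (by norm_num) hs
  have hL_hi : (L:ℝ) ≤ 0.1 * 2^s := by
    rw [hL]; exact Nat.floor_le (by positivity)
  have hL_lo : 0.1 * 2^s - 1 ≤ (L:ℝ) := by
    have := Nat.lt_floor_add_one ((0.1:ℝ) * 2^s)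
    rw [← hL] at this; linarith
  have hL1 : 1 ≤ L := by
    have h1 : (1:ℝ) ≤ (L:ℝ) := by linarith
    exact_mod_cast h1
  -- Lp bounds
  have hps : (1/2:ℝ)^s * (2:ℝ)^s = 1 := by
    rw [← mul_pow]; norm_num
  have hhalf : (1/2:ℝ)^s ≤ 1/256 := by
    calc (1/2:ℝ)^s ≤ (1/2)^8 := pow_le_pow_of_le_one (by norm_num) (by norm_num) hs
    _ = 1/256 := by norm_num
  have hp_pos : (0:ℝ) ≤ p := le_trans (by positivity) hp_lo
  have hLp_lo : (0.1:ℝ) - 1/256 ≤ (L:ℝ) * p := by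
    have h1 : (0.1 * 2^s - 1) * (1/2:ℝ)^s ≤ (L:ℝ) * p := by
      apply mul_le_mul hL_lo hp_lo (by positivity) (by positivity)
    have h2 : ((0.1:ℝ) * 2^s - 1) * (1/2:ℝ)^s = 0.1 - (1/2:ℝ)^s := by
      linear_combination (0.1:ℝ) * hps
    rw [h2] at h1
    linarith
  have hLp_hi : (L:ℝ) * p ≤ 1/9 := by
    have h1 : (L:ℝ) * p ≤ (0.1 * 2^s) * ((10/9) * (1/2:ℝ)^s) := by
      apply mul_le_mul hL_hi hp_hi hp_pos (by positivity)
    have h2 : ((0.1:ℝ) * 2^s) * ((10/9) * (1/2:ℝ)^s) = 1/9 := by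
      linear_combination (1/9:ℝ) * hps
    rw [h2] at h1
    exact h1
  -- Bernoulli
  have hp2 : p ≤ 1/9 := by linarith [hp_hi, hhalf]
  have hbern : (8/9:ℝ) ≤ (1-p)^(L-1) := by
    have hb := one_add_mul_le_pow (a := -p) (by linarith) (L-1)
    have hcast : ((L-1 : ℕ):ℝ) ≤ (L:ℝ) := by exact_mod_cast Nat.sub_le L 1
    have h2 : ((L-1:ℕ):ℝ) * p ≤ (L:ℝ) * p := mul_le_mul_of_nonneg_right hcast hp_pos
    have h3 : 1 + ((L-1:ℕ):ℝ) * (-p) ≤ (1 + (-p))^(L-1) := hb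
    have : (1:ℝ) + (-p) = 1 - p := by ring
    rw [this] at h3
    nlinarith
  have final : (0.03:ℝ) < (L:ℝ) * p * (1-p)^(L-1) := by
    calc (0.03:ℝ) < (0.1 - 1/256) * (8/9) := by norm_num
    _ ≤ ((L:ℝ) * p) * ((1-p)^(L-1)) := by
        apply mul_le_mul hLp_lo hbern (by norm_num) (by linarith)
  -- counting
  set Kset := Finset.univ.filter (fun i => x i = true) with hKset
  set A : Finset (Fin s → Fin m) := Finset.univ.filter (fun f => ∀ j, f j ∈ Kset) with hAdef
  have hA : A.card = k ^ s := by
    rw [hAdef, card_filter_forall_mem']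
    simp [hk]
  have hcardfun : Fintype.card (Fin s → Fin m) = m ^ s := by
    simp [Fintype.card_fun]
  have hAc : Aᶜ.card = m ^ s - k ^ s := by
    rw [Finset.card_compl, hA, hcardfun]
  have hEvent : (Finset.univ.filter (fun T : Fin L → Fin s → Fin m =>
          (Finset.univ.filter (fun ℓ : Fin L => ∀ j, x (T ℓ j) = true)).card = 1))
      = (Finset.univ.filter (fun T : Fin L → Fin s → Fin m =>
          (Finset.univ.filter (fun ℓ : Fin L => T ℓ ∈ A)).card = 1)) := by
    apply Finset.filter_congr
    intro T _
    have hfil : (Finset.univ.filter (fun ℓ : Fin L => ∀ j, x (T ℓ j) = true))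
        = (Finset.univ.filter (fun ℓ : Fin L => T ℓ ∈ A)) := by
      apply Finset.filter_congr
      intro ℓ _
      simp [hAdef, hKset]
    rw [hfil]
  have hcount : (Finset.univ.filter (fun T : Fin L → Fin s → Fin m =>
          (Finset.univ.filter (fun ℓ : Fin L => ∀ j, x (T ℓ j) = true)).card = 1)).card
      = L * (k ^ s * (m ^ s - k ^ s) ^ (L - 1)) := by
    rw [hEvent, card_exactly_one', hA, hAc]
  have hTot : Fintype.card (Fin L → Fin s → Fin m) = (m ^ s) ^ L := by
    simp [Fintype.card_fun]
  rw [hcount, hTot]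
  -- cast to reals
  have hk_le : k ≤ m := by
    calc k ≤ Finset.univ.card := Finset.card_filter_le _ _
    _ = m := by simp
  have hpow_le : k ^ s ≤ m ^ s := Nat.pow_le_pow_left hk_le s
  have hcast : ((L * (k ^ s * (m ^ s - k ^ s) ^ (L - 1)) : ℕ) : ℝ)
      = (L : ℝ) * ((k:ℝ)^s * ((m:ℝ)^s - (k:ℝ)^s) ^ (L-1)) := by
    push_cast [Nat.cast_sub hpow_le]
    ring
  have hcast2 : (((m ^ s) ^ L : ℕ) : ℝ) = ((m:ℝ)^s) ^ L := by push_cast; ring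
  rw [hcast, hcast2]
  -- express as L * p * (1-p)^(L-1)
  have hN : (0:ℝ) < (m:ℝ)^s := by positivity
  have hpN : p = (k:ℝ)^s / (m:ℝ)^s := by rw [hp, div_pow]
  have h1p : (1:ℝ) - p = ((m:ℝ)^s - (k:ℝ)^s) / (m:ℝ)^s := by
    rw [hpN]; field_simp
  have hL1' : L - 1 + 1 = L := Nat.succ_pred_eq_of_pos hL1
  have hNL : ((m:ℝ)^s)^L = (m:ℝ)^s * ((m:ℝ)^s)^(L-1) := by
    conv_lhs => rw [← hL1']
    rw [pow_succ']
  have hratio : (L : ℝ) * ((k:ℝ)^s * ((m:ℝ)^s - (k:ℝ)^s) ^ (L-1)) / ((m:ℝ)^s) ^ L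
      = (L:ℝ) * p * (1-p)^(L-1) := by
    rw [h1p, hpN, div_pow, hNL]
    field_simp
  rw [hratio]
  exact final
end

section
/- Let n be a positive integer, let A ⊆ [n] with a := |A|, let C := [n] \ A, let L be a positive integer, let T_1,…,T_L be subsets of C, and let b ∈ {0,1}^L. For x ∈ {0,1}^n write x_A and x_C for the restrictions of x to A and C, write x̄ for the bitwise complement of x, and let S_T(z) := {ℓ ∈ [L] : z_i = 1 for all i ∈ T_ℓ} for z ∈ {0,1}^C. Define g⁰ : {0,1}^A → {0,1} to be identically 0, and g¹ : {0,1}^A → {0,1} by g¹(z) = 1 if |z| > a/2 + √a or |z| < a/2 − √a, and g¹(z) = 0 if a/2 − √a ≤ |z| ≤ a/2 + √a. Define f : {0,1}^n × {0,1} × {0,1} → {0,1} by: f(x,0,0) = f(x,1,1) = 0 for all x; f(x,0,1) = 0 if |S_T(x_C)| ≠ 1, and f(x,0,1) = g^{b_ℓ}(x_A) if S_T(x_C) = {ℓ}; f(x,1,0) = 0 if |S_T(x̄_C)| ≠ 1, and f(x,1,0) = g^{1−b_ℓ}(x_A) if S_T(x̄_C) = {ℓ}. Then f, viewed as a function on {0,1}^{n+2},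 is intersecting: for any u, v ∈ {0,1}^{n+2} with f(u) = f(v) = 1 there exists a coordinate i with u_i = v_i = 1. -/
/-!
A `1`-input of `f` has `(y₁, y₂) = (0, 1)` or `(1, 0)`. If `(x, 0, 1)` is a `1`-input, `x` satisfies
exactly one term `T ℓ` and `b ℓ = 1`; if `(x', 1, 0)` is one, the complement of `x'` satisfies exactly
one term `T ℓ'` and `b ℓ' = 0`, so `ℓ ≠ ℓ'`. Were the supports of `x` and `x'` disjoint, the
complement of `x'` would contain `x` and hence satisfy `T ℓ` too, forcing `ℓ = ℓ'`. Two `1`-inputs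
with equal last coordinates meet there.
-/

open Finset

lemma exists_unique_of_select {ι : Type*} [Fintype ι] {P : ι → Prop} [DecidablePred P]
    {y : Bool} {p : ι → Bool} (hzero : (univ.filter P).card ≠ 1 → y = false)
    (hone : ∀ ℓ, univ.filter P = {ℓ} → y = p ℓ) (hy : y = true) :
    ∃ ℓ, P ℓ ∧ (∀ k, P k → k = ℓ) ∧ p ℓ = true := by
  obtain ⟨ℓ, hℓ⟩ := card_eq_one.mp (by by_contra h; simp [hzero h] at hy)
  obtain ⟨hmem, huniq⟩ := eq_singleton_iff_unique_mem.mp hℓ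
  exact ⟨ℓ, (mem_filter.mp hmem).2, fun k hk => huniq k (by simpa using hk), hone ℓ hℓ ▸ hy⟩

lemma exists_common_true_of_ne_unique {ι α : Type*} {T : ι → Finset α} {u v : α → Bool}
    {ℓ ℓ' : ι} (hu : ∀ i ∈ T ℓ, u i = true) (hv : ∀ k, (∀ i ∈ T k, v i = false) → k = ℓ')
    (hne : ℓ ≠ ℓ') : ∃ i, u i = true ∧ v i = true := by
  by_contra! h
  exact hne (hv ℓ fun i hi => by simpa using h i (hu i hi))

theorem yes_function_is_intersecting_general (n : ℕ) (L : ℕ)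
    (T : Fin L → Finset (Fin n))
    (b : Fin L → Bool)
    (g1 : (Fin n → Bool) → Bool)
    (f : (Fin n → Bool) → Bool → Bool → Bool)
    (hf00 : ∀ x, f x false false = false)
    (hf11 : ∀ x, f x true true = false)
    (hf01zero : ∀ x,
      (Finset.univ.filter (fun ℓ : Fin L => ∀ i ∈ T ℓ, x i = true)).card ≠ 1 →
      f x false true = false)
    (hf01one : ∀ (x : Fin n → Bool) (ℓ : Fin L),
      Finset.univ.filter (fun ℓ' : Fin L => ∀ i ∈ T ℓ', x i = true) = {ℓ} →
      f x false true = (if b ℓ = true then g1 x else false))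
    (hf10zero : ∀ x,
      (Finset.univ.filter (fun ℓ : Fin L => ∀ i ∈ T ℓ, x i = false)).card ≠ 1 →
      f x true false = false)
    (hf10one : ∀ (x : Fin n → Bool) (ℓ : Fin L),
      Finset.univ.filter (fun ℓ' : Fin L => ∀ i ∈ T ℓ', x i = false) = {ℓ} →
      f x true false = (if b ℓ = true then false else g1 x)) :
    ∀ (u v : Fin n → Bool) (u1 u2 v1 v2 : Bool),
      f u u1 u2 = true → f v v1 v2 = true →
      (∃ i, u i = true ∧ v i = true) ∨ (u1 = true ∧ v1 = true) ∨ (u2 = true ∧ v2 = true) := by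
  have shape : ∀ x y₁ y₂, f x y₁ y₂ = true → y₂ = !y₁ := by
    intro x y₁ y₂ h
    cases y₁ <;> cases y₂ <;> simp [hf00, hf11] at h ⊢
  have cross : ∀ x x', f x false true = true → f x' true false = true →
      ∃ i, x i = true ∧ x' i = true := fun x x' hx hx' => by
    obtain ⟨ℓ, hℓ, -, hb⟩ := exists_unique_of_select (hf01zero x) (hf01one x) hx
    obtain ⟨ℓ', -, hℓ', hb'⟩ := exists_unique_of_select (hf10zero x') (hf10one x') hx'
    refine exists_common_true_of_ne_unique hℓ hℓ' fun h => ?_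
    subst h
    cases hbℓ : b ℓ <;> simp [hbℓ] at hb hb'
  intro u v u₁ u₂ v₁ v₂ hu hv
  obtain rfl := shape u u₁ u₂ hu
  obtain rfl := shape v v₁ v₂ hv
  cases u₁ <;> cases v₁
  · exact Or.inr (Or.inr ⟨rfl, rfl⟩)
  · exact Or.inl (cross u v hu hv)
  · exact Or.inl ((cross v u hv hu).imp fun _ => And.symm)
  · exact Or.inr (Or.inl ⟨rfl, rfl⟩)

/-- The yes-functions in the intersectingness lower bound construction are
intersecting.  Here `[n]` is `Fin n`, `A ⊆ [n]` with `a = |A|`, `C = [n] \ A`, the terms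
`T_ℓ ⊆ C`, `b ∈ {0,1}^L`, and a point of `{0,1}^{n+2}` is encoded as a triple
`(x, y₁, y₂) ∈ {0,1}^n × {0,1} × {0,1}`.  `g¹` is the indicator that the weight of
`x_A` is `> a/2 + √a` or `< a/2 − √a` (and `g⁰ ≡ 0`); the function `f` is specified
via hypotheses exactly as in the construction.  Conclusion: `f` is intersecting, i.e.
any two `1`-inputs share a coordinate where both are `1` (the shared coordinate may be
among the first `n` coordinates or one of the two extra coordinates). -/
theorem yes_function_is_intersecting (n : ℕ) (A : Finset (Fin n)) (L : ℕ) (hL : 0 < L)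
    (T : Fin L → Finset (Fin n)) (hT : ∀ ℓ, T ℓ ⊆ Aᶜ)
    (b : Fin L → Bool)
    (g1 : (Fin n → Bool) → Bool)
    (hg1 : ∀ x : Fin n → Bool, g1 x = true ↔
      ((A.card : ℝ) / 2 + Real.sqrt A.card < ((A.filter (fun i => x i = true)).card : ℝ) ∨
        ((A.filter (fun i => x i = true)).card : ℝ) < (A.card : ℝ) / 2 - Real.sqrt A.card))
    (f : (Fin n → Bool) → Bool → Bool → Bool)
    (hf00 : ∀ x, f x false false = false)
    (hf11 : ∀ x, f x true true = false)
    (hf01zero : ∀ x,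
      (Finset.univ.filter (fun ℓ : Fin L => ∀ i ∈ T ℓ, x i = true)).card ≠ 1 →
      f x false true = false)
    (hf01one : ∀ (x : Fin n → Bool) (ℓ : Fin L),
      Finset.univ.filter (fun ℓ' : Fin L => ∀ i ∈ T ℓ', x i = true) = {ℓ} →
      f x false true = (if b ℓ = true then g1 x else false))
    (hf10zero : ∀ x,
      (Finset.univ.filter (fun ℓ : Fin L => ∀ i ∈ T ℓ, x i = false)).card ≠ 1 →
      f x true false = false)
    (hf10one : ∀ (x : Fin n → Bool) (ℓ : Fin L),
      Finset.univ.filter (fun ℓ' : Fin L => ∀ i ∈ T ℓ', x i = false) = {ℓ} →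
      f x true false = (if b ℓ = true then false else g1 x)) :
    ∀ (u v : Fin n → Bool) (u1 u2 v1 v2 : Bool),
      f u u1 u2 = true → f v v1 v2 = true →
      (∃ i, u i = true ∧ v i = true) ∨ (u1 = true ∧ v1 = true) ∨ (u2 = true ∧ v2 = true) :=
  yes_function_is_intersecting_general n L T b g1 f hf00 hf11 hf01zero hf01one hf10zero hf10one
end

section
/- Let n, a, t be natural numbers with 1 ≤ a < n, let I ⊆ [n] with |I| = t, and let A be a uniformly random a-element subset of [n]. Then for every integer k with 1 ≤ k ≤ a, Pr_A[|I ∩ A| ≥ k] ≤ C(a,k) · (t/(n−a))^k, where C(a,k) denotes the binomial coefficient a choose k. -/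
open Finset in
lemma count_supersets_le (n a k : ℕ) (S : Finset (Fin n)) (hS : S.card = k) :
    ((Finset.powersetCard a (Finset.univ : Finset (Fin n))).filter
        (fun A => S ⊆ A)).card ≤ (n - k).choose (a - k) := by
  have h : ((Finset.powersetCard a (Finset.univ : Finset (Fin n))).filter
      (fun A => S ⊆ A)).card ≤ (Finset.powersetCard (a - k) Sᶜ).card := by
    apply Finset.card_le_card_of_injOn (fun A => A \ S)
    · intro A hA
      simp only [Finset.mem_coe, Finset.mem_filter, Finset.mem_powersetCard] at hA ⊢
      refine ⟨fun x hx => ?_, ?_⟩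
      · simp only [Finset.mem_sdiff] at hx
        simp [Finset.mem_compl, hx.2]
      · rw [Finset.card_sdiff_of_subset hA.2, hA.1.2, hS]
    · intro A hA B hB hAB
      simp only [Finset.coe_filter, Set.mem_setOf_eq] at hA hB
      have hA' := Finset.sdiff_union_of_subset hA.2
      have hB' := Finset.sdiff_union_of_subset hB.2
      have hAB' : A \ S = B \ S := hAB
      rw [← hA', ← hB', hAB']
  rwa [Finset.card_powersetCard, Finset.card_compl, Fintype.card_fin, hS] at h

open Finset in
lemma count_filter_le (n a t k : ℕ) (I : Finset (Fin n)) (hI : I.card = t) :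
    ((Finset.powersetCard a (Finset.univ : Finset (Fin n))).filter
        (fun A => k ≤ (I ∩ A).card)).card ≤ t.choose k * (n - k).choose (a - k) := by
  classical
  set P := Finset.powersetCard a (Finset.univ : Finset (Fin n))
  have hsub : P.filter (fun A => k ≤ (I ∩ A).card) ⊆
      (Finset.powersetCard k I).biUnion (fun S => P.filter (fun A => S ⊆ A)) := by
    intro A hA
    simp only [Finset.mem_filter] at hA
    obtain ⟨S, hSsub, hScard⟩ := Finset.exists_subset_card_eq hA.2
    refine Finset.mem_biUnion.2 ⟨S, ?_, ?_⟩
    · exact Finset.mem_powersetCard.2 ⟨hSsub.trans Finset.inter_subset_left, hScard⟩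
    · exact Finset.mem_filter.2 ⟨hA.1, hSsub.trans Finset.inter_subset_right⟩
  calc (P.filter (fun A => k ≤ (I ∩ A).card)).card
      ≤ ((Finset.powersetCard k I).biUnion (fun S => P.filter (fun A => S ⊆ A))).card :=
        Finset.card_le_card hsub
    _ ≤ ∑ S ∈ Finset.powersetCard k I, (P.filter (fun A => S ⊆ A)).card :=
        Finset.card_biUnion_le
    _ ≤ ∑ _S ∈ Finset.powersetCard k I, (n - k).choose (a - k) := by
        apply Finset.sum_le_sum
        intro S hS
        exact count_supersets_le n a k S (Finset.mem_powersetCard.1 hS).2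
    _ = t.choose k * (n - k).choose (a - k) := by
        rw [Finset.sum_const, Finset.card_powersetCard, hI, smul_eq_mul]

lemma key_nat_ineq (n a t k : ℕ) (han : a < n) (hk1 : 1 ≤ k) (hka : k ≤ a) :
    t.choose k * (n - k).choose (a - k) * (n - a) ^ k ≤
      t ^ k * (n.choose a * a.choose k) := by
  have h1 : t.choose k * (n - a) ^ k ≤ t ^ k * n.choose k := by
    have hd1 : (Nat.factorial k) * t.choose k = t.descFactorial k :=
      (Nat.descFactorial_eq_factorial_mul_choose t k).symm
    have hd2 : (Nat.factorial k) * n.choose k = n.descFactorial k :=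
      (Nat.descFactorial_eq_factorial_mul_choose n k).symm
    have h2 : (n - a) ^ k ≤ n.descFactorial k := by
      calc (n - a) ^ k ≤ (n + 1 - k) ^ k := by
            apply Nat.pow_le_pow_left
            omega
        _ ≤ n.descFactorial k := Nat.pow_sub_le_descFactorial n k
    have : (Nat.factorial k) * (t.choose k * (n - a) ^ k) ≤ (Nat.factorial k) * (t ^ k * n.choose k) := by
      calc (Nat.factorial k) * (t.choose k * (n - a) ^ k) = t.descFactorial k * (n - a) ^ k := by
            rw [← hd1]; ring
        _ ≤ t ^ k * n.descFactorial k :=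
            Nat.mul_le_mul (Nat.descFactorial_le_pow t k) h2
        _ = (Nat.factorial k) * (t ^ k * n.choose k) := by rw [← hd2]; ring
    exact Nat.le_of_mul_le_mul_left this k.factorial_pos
  have hid : n.choose a * a.choose k = n.choose k * (n - k).choose (a - k) :=
    Nat.choose_mul hka
  calc t.choose k * (n - k).choose (a - k) * (n - a) ^ k
      = (t.choose k * (n - a) ^ k) * (n - k).choose (a - k) := by ring
    _ ≤ (t ^ k * n.choose k) * (n - k).choose (a - k) :=
        Nat.mul_le_mul_right _ h1
    _ = t ^ k * (n.choose a * a.choose k) := by rw [hid]; ring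

/-- For `1 ≤ a < n`, `I ⊆ [n]` with `|I| = t`, a uniformly random
`a`-element subset `A` of `[n]`, and any `1 ≤ k ≤ a`:
`Pr[|I ∩ A| ≥ k] ≤ (a choose k) · (t/(n−a))^k`. -/
theorem random_subset_intersection_bound (n a t k : ℕ) (ha1 : 1 ≤ a) (han : a < n)
    (I : Finset (Fin n)) (hI : I.card = t) (hk1 : 1 ≤ k) (hka : k ≤ a) :
    (((Finset.powersetCard a (Finset.univ : Finset (Fin n))).filter
        (fun A => k ≤ (I ∩ A).card)).card : ℝ) /
      (((Finset.powersetCard a (Finset.univ : Finset (Fin n))).card : ℝ)) ≤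
    (a.choose k : ℝ) * ((t : ℝ) / ((n : ℝ) - (a : ℝ))) ^ k := by
  have hcount := count_filter_le n a t k I hI
  have hkey := key_nat_ineq n a t k han hk1 hka
  have hP : (Finset.powersetCard a (Finset.univ : Finset (Fin n))).card = n.choose a := by
    rw [Finset.card_powersetCard, Finset.card_univ, Fintype.card_fin]
  rw [hP]
  have hna : ((n : ℝ) - a) = ((n - a : ℕ) : ℝ) := by
    rw [Nat.cast_sub (le_of_lt han)]
  have hDpos : (0 : ℝ) < (n.choose a : ℝ) := by
    exact_mod_cast Nat.choose_pos (le_of_lt han)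
  have hnapos : (0 : ℝ) < ((n - a : ℕ) : ℝ) ^ k := by
    apply pow_pos
    exact_mod_cast Nat.sub_pos_of_lt han
  have hnat : ((Finset.powersetCard a (Finset.univ : Finset (Fin n))).filter
        (fun A => k ≤ (I ∩ A).card)).card * (n - a) ^ k ≤
      a.choose k * t ^ k * n.choose a := by
    calc ((Finset.powersetCard a (Finset.univ : Finset (Fin n))).filter
          (fun A => k ≤ (I ∩ A).card)).card * (n - a) ^ k
        ≤ t.choose k * (n - k).choose (a - k) * (n - a) ^ k :=
          Nat.mul_le_mul_right _ hcount
      _ ≤ t ^ k * (n.choose a * a.choose k) := hkey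
      _ = a.choose k * t ^ k * n.choose a := by ring
  rw [hna, div_pow, mul_div_assoc', div_le_div_iff₀ hDpos hnapos]
  exact_mod_cast hnat
end

section
/- Let m be a positive integer and ε ∈ (0,1] be such that s := √m/ε is a positive integer, let L := ⌊0.1·2^s⌋, and draw T = (T_1,…,T_L) from Talagrand(m,ε). Let x, y ∈ {0,1}^m and let t := |{i ∈ [m] : x_i = 0 and y_i = 1}|. Then the probability that there exists an ℓ ∈ [L] with S_T(x) = S_T(y) = {ℓ} is at most (1 − t/m)^s. -/
lemma key_real (u v : ℝ) (hu : 0 ≤ u) (huv : u ≤ v) : ∀ n : ℕ, ((n:ℝ)+1) * u * (v-u)^n ≤ v^(n+1) := by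
  intro n
  induction n with
  | zero => simpa using huv
  | succ n ih =>
    rcases le_or_gt (((n:ℝ)+2) * u) v with h | h
    · calc ((((n:ℕ)+1 : ℕ):ℝ)+1) * u * (v-u)^(n+1) = (((n:ℝ)+2) * u) * (v-u)^(n+1) := by push_cast; ring
        _ ≤ v * v^(n+1) := by
            apply mul_le_mul h (pow_le_pow_left₀ (by linarith) (by linarith) _) (pow_nonneg (by linarith) _) (le_trans hu huv)
        _ = v^(n+2) := by ring
        _ = v^((n+1)+1) := by norm_num
    · have h1 : (0:ℝ) ≤ v - u := by linarith
      have h2 : ((n:ℝ)+2) * (v - u) ≤ ((n:ℝ)+1) * v := by nlinarith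
      calc ((((n:ℕ)+1 : ℕ):ℝ)+1) * u * (v-u)^(n+1)
          = (((n:ℝ)+2) * (v-u)) * (u * (v-u)^n) := by push_cast; ring
        _ ≤ (((n:ℝ)+1) * v) * (u * (v-u)^n) := by
            apply mul_le_mul_of_nonneg_right h2 (by positivity)
        _ = v * (((n:ℝ)+1) * u * (v-u)^n) := by ring
        _ ≤ v * v^(n+1) := by
            apply mul_le_mul_of_nonneg_left ih (le_trans hu huv)
        _ = v^((n+1)+1) := by ring

lemma card_sat (m s : ℕ) (P : Fin m → Prop) [DecidablePred P] :
    (Finset.univ.filter (fun g : Fin s → Fin m => ∀ j, P (g j))).card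
      = (Finset.univ.filter P).card ^ s := by
  have : (Finset.univ.filter (fun g : Fin s → Fin m => ∀ j, P (g j)))
      = Fintype.piFinset (fun _ : Fin s => Finset.univ.filter P) := by
    ext g; simp [Fintype.mem_piFinset]
  rw [this, Fintype.card_piFinset, Finset.prod_const, Finset.card_univ, Fintype.card_fin]

lemma final_bound (m s L a c t qq : ℕ) (hm : 0 < m) (hL : 1 ≤ L) (hac : a ≤ c) (hcm : c ≤ m)
    (ht : (t:ℝ) = (c:ℝ) - a) (hq : (qq:ℝ) ≤ (m:ℝ)^s - (c:ℝ)^s) :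
    ((L * a^s * qq^(L-1) : ℕ) : ℝ) / (((m^s)^L : ℕ) : ℝ) ≤ (1 - (t:ℝ)/m)^s := by
  have hm' : (0:ℝ) < m := by exact_mod_cast hm
  have hM : (0:ℝ) < (m:ℝ)^s := by positivity
  have hML : (0:ℝ) < ((m:ℝ)^s)^L := by positivity
  have hc' : (c:ℝ) ≤ m := by exact_mod_cast hcm
  have ha' : (a:ℝ) ≤ c := by exact_mod_cast hac
  have ha0 : (0:ℝ) ≤ a := Nat.cast_nonneg a
  have hc0 : (0:ℝ) ≤ c := Nat.cast_nonneg c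
  have hCs : (c:ℝ)^s ≤ (m:ℝ)^s := pow_le_pow_left₀ hc0 hc' s
  have hrw : (1 - (t:ℝ)/m) = ((m:ℝ) - c + a)/m := by rw [ht]; field_simp; ring
  rw [hrw]
  push_cast
  rw [div_pow, div_le_div_iff₀ hML hM]
  -- goal : L * a^s * qq^(L-1) * m^s ≤ (m - c + a)^s * (m^s)^L
  have hmca : (0:ℝ) ≤ (m:ℝ) - c + a := by linarith
  have hstep1 : (a:ℝ)^s * (m:ℝ)^s ≤ (c:ℝ)^s * ((m:ℝ)-c+a)^s := by
    rw [← mul_pow, ← mul_pow]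
    apply pow_le_pow_left₀ (by positivity)
    nlinarith
  have hqpow : (qq:ℝ)^(L-1) ≤ ((m:ℝ)^s - (c:ℝ)^s)^(L-1) :=
    pow_le_pow_left₀ (Nat.cast_nonneg qq) hq _
  have hkey : (L:ℝ) * (c:ℝ)^s * ((m:ℝ)^s - (c:ℝ)^s)^(L-1) ≤ ((m:ℝ)^s)^L := by
    have := key_real ((c:ℝ)^s) ((m:ℝ)^s) (by positivity) hCs (L-1)
    rw [Nat.sub_add_cancel hL] at this
    have hcast : ((L-1 : ℕ):ℝ) + 1 = L := by
      rw [Nat.cast_sub hL]; push_cast; ring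
    rwa [hcast] at this
  calc (L:ℝ) * (a:ℝ)^s * (qq:ℝ)^(L-1) * (m:ℝ)^s
      = ((a:ℝ)^s * (m:ℝ)^s) * ((L:ℝ) * (qq:ℝ)^(L-1)) := by ring
    _ ≤ ((a:ℝ)^s * (m:ℝ)^s) * ((L:ℝ) * ((m:ℝ)^s - (c:ℝ)^s)^(L-1)) := by
        apply mul_le_mul_of_nonneg_left (mul_le_mul_of_nonneg_left hqpow (Nat.cast_nonneg L)) (by positivity)
    _ ≤ ((c:ℝ)^s * ((m:ℝ)-c+a)^s) * ((L:ℝ) * ((m:ℝ)^s - (c:ℝ)^s)^(L-1)) := by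
        apply mul_le_mul_of_nonneg_right hstep1
        have : (0:ℝ) ≤ (m:ℝ)^s - (c:ℝ)^s := by linarith
        positivity
    _ = ((m:ℝ)-c+a)^s * ((L:ℝ) * (c:ℝ)^s * ((m:ℝ)^s - (c:ℝ)^s)^(L-1)) := by ring
    _ ≤ ((m:ℝ)-c+a)^s * ((m:ℝ)^s)^L := by
        apply mul_le_mul_of_nonneg_left hkey (by positivity)

lemma count_event (m s L : ℕ) (x y : Fin m → Bool) :
    (Finset.univ.filter (fun T : Fin L → Fin s → Fin m =>
        ∃ ℓ : Fin L,
          Finset.univ.filter (fun ℓ' : Fin L => ∀ j, x (T ℓ' j) = true) = {ℓ} ∧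
          Finset.univ.filter (fun ℓ' : Fin L => ∀ j, y (T ℓ' j) = true) = {ℓ})).card
    = L * (Finset.univ.filter (fun g : Fin s → Fin m =>
            (∀ j, x (g j) = true) ∧ (∀ j, y (g j) = true))).card
        * ((Finset.univ.filter (fun g : Fin s → Fin m =>
            ¬(∀ j, x (g j) = true) ∧ ¬(∀ j, y (g j) = true))).card) ^ (L - 1) := by
  classical
  set R := Finset.univ.filter (fun g : Fin s → Fin m =>
            (∀ j, x (g j) = true) ∧ (∀ j, y (g j) = true)) with hR
  set Q := Finset.univ.filter (fun g : Fin s → Fin m =>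
            ¬(∀ j, x (g j) = true) ∧ ¬(∀ j, y (g j) = true)) with hQ
  have hsplit : (Finset.univ.filter (fun T : Fin L → Fin s → Fin m =>
        ∃ ℓ : Fin L,
          Finset.univ.filter (fun ℓ' : Fin L => ∀ j, x (T ℓ' j) = true) = {ℓ} ∧
          Finset.univ.filter (fun ℓ' : Fin L => ∀ j, y (T ℓ' j) = true) = {ℓ}))
      = Finset.univ.biUnion (fun ℓ : Fin L =>
          Finset.univ.filter (fun T : Fin L → Fin s → Fin m =>
            Finset.univ.filter (fun ℓ' : Fin L => ∀ j, x (T ℓ' j) = true) = {ℓ} ∧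
            Finset.univ.filter (fun ℓ' : Fin L => ∀ j, y (T ℓ' j) = true) = {ℓ})) := by
    ext T; simp [Finset.mem_biUnion]
  rw [hsplit, Finset.card_biUnion]
  · have hpiece : ∀ ℓ : Fin L,
        (Finset.univ.filter (fun T : Fin L → Fin s → Fin m =>
            Finset.univ.filter (fun ℓ' : Fin L => ∀ j, x (T ℓ' j) = true) = {ℓ} ∧
            Finset.univ.filter (fun ℓ' : Fin L => ∀ j, y (T ℓ' j) = true) = {ℓ})).card
          = R.card * Q.card ^ (L - 1) := by
      intro ℓ
      have heq : (Finset.univ.filter (fun T : Fin L → Fin s → Fin m =>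
            Finset.univ.filter (fun ℓ' : Fin L => ∀ j, x (T ℓ' j) = true) = {ℓ} ∧
            Finset.univ.filter (fun ℓ' : Fin L => ∀ j, y (T ℓ' j) = true) = {ℓ}))
          = Fintype.piFinset (fun ℓ' : Fin L => if ℓ' = ℓ then R else Q) := by
        ext T
        rw [Finset.mem_filter, Fintype.mem_piFinset]
        simp only [Finset.mem_univ, true_and]
        constructor
        · rintro ⟨hx, hy⟩ ℓ'
          by_cases hh : ℓ' = ℓ
          · subst hh
            rw [if_pos rfl, hR, Finset.mem_filter]
            have h1 : ℓ' ∈ Finset.univ.filter (fun ℓ' : Fin L => ∀ j, x (T ℓ' j) = true) := by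
              rw [hx]; exact Finset.mem_singleton_self ℓ'
            have h2 : ℓ' ∈ Finset.univ.filter (fun ℓ' : Fin L => ∀ j, y (T ℓ' j) = true) := by
              rw [hy]; exact Finset.mem_singleton_self ℓ'
            exact ⟨Finset.mem_univ _, (Finset.mem_filter.mp h1).2, (Finset.mem_filter.mp h2).2⟩
          · rw [if_neg hh, hQ, Finset.mem_filter]
            refine ⟨Finset.mem_univ _, ?_, ?_⟩
            · intro hsat
              exact hh (Finset.mem_singleton.mp (hx ▸ (Finset.mem_filter.mpr ⟨Finset.mem_univ _, hsat⟩)))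
            · intro hsat
              exact hh (Finset.mem_singleton.mp (hy ▸ (Finset.mem_filter.mpr ⟨Finset.mem_univ _, hsat⟩)))
        · intro h
          have hmem : ∀ ℓ' : Fin L, (ℓ' = ℓ → T ℓ' ∈ R) ∧ (ℓ' ≠ ℓ → T ℓ' ∈ Q) := by
            intro ℓ'
            constructor
            · intro hh; have := h ℓ'; rwa [if_pos hh] at this
            · intro hh; have := h ℓ'; rwa [if_neg hh] at this
          constructor
          · ext ℓ''
            simp only [Finset.mem_filter, Finset.mem_univ, true_and, Finset.mem_singleton]
            constructor
            · intro hsat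
              by_contra hne
              have := (hmem ℓ'').2 hne
              rw [hQ, Finset.mem_filter] at this
              exact this.2.1 hsat
            · intro hE; subst hE
              have := (hmem ℓ'').1 rfl
              rw [hR, Finset.mem_filter] at this
              exact this.2.1
          · ext ℓ''
            simp only [Finset.mem_filter, Finset.mem_univ, true_and, Finset.mem_singleton]
            constructor
            · intro hsat
              by_contra hne
              have := (hmem ℓ'').2 hne
              rw [hQ, Finset.mem_filter] at this
              exact this.2.2 hsat
            · intro hE; subst hE
              have := (hmem ℓ'').1 rfl
              rw [hR, Finset.mem_filter] at this
              exact this.2.2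
      rw [heq, Fintype.card_piFinset]
      have hcards : ∀ ℓ' : Fin L, (if ℓ' = ℓ then R else Q).card = if ℓ' = ℓ then R.card else Q.card := by
        intro ℓ'; by_cases hh : ℓ' = ℓ <;> simp [hh]
      rw [Finset.prod_congr rfl (fun ℓ' _ => hcards ℓ')]
      rw [← Finset.mul_prod_erase Finset.univ _ (Finset.mem_univ ℓ), if_pos rfl]
      have hconst : ∀ ℓ' ∈ Finset.univ.erase ℓ, (if ℓ' = ℓ then R.card else Q.card) = Q.card := by
        intro ℓ' hl'
        rw [if_neg (Finset.mem_erase.mp hl').1]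
      rw [Finset.prod_congr rfl hconst, Finset.prod_const,
        Finset.card_erase_of_mem (Finset.mem_univ ℓ), Finset.card_univ, Fintype.card_fin]
    rw [Finset.sum_congr rfl (fun ℓ _ => hpiece ℓ), Finset.sum_const, Finset.card_univ,
      Fintype.card_fin, smul_eq_mul, mul_assoc]
  · intro ℓ _ ℓ' _ hne
    rw [Function.onFun, Finset.disjoint_left]
    intro T h1 h2
    rw [Finset.mem_filter] at h1 h2
    exact hne (Finset.singleton_injective (h1.2.1.symm.trans h2.2.1))

/-- Talagrand's random DNF with parameters `m`, `ε`, where `s = √m/ε`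
is a positive integer and `L = ⌊0.1·2^s⌋`.  A draw `T` is a uniformly random function
`Fin L → Fin s → Fin m`; `S_T(z) = {ℓ : z (T ℓ j) = true for all j}`.  For any
`x, y ∈ {0,1}^m`, letting `t := |{i : x_i = 0 ∧ y_i = 1}|`, the probability that there
exists `ℓ` with `S_T(x) = S_T(y) = {ℓ}` is at most `(1 − t/m)^s`. -/
theorem talagrand_same_unique_term_bound (m s L : ℕ) (ε : ℝ)
    (hm : 0 < m) (hε0 : 0 < ε) (hε1 : ε ≤ 1)
    (hs : 0 < s) (hsval : (s : ℝ) = Real.sqrt m / ε)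
    (hL : L = ⌊(0.1 : ℝ) * 2 ^ s⌋₊)
    (x y : Fin m → Bool) :
    ((Finset.univ.filter (fun T : Fin L → Fin s → Fin m =>
        ∃ ℓ : Fin L,
          Finset.univ.filter (fun ℓ' : Fin L => ∀ j, x (T ℓ' j) = true) = {ℓ} ∧
          Finset.univ.filter (fun ℓ' : Fin L => ∀ j, y (T ℓ' j) = true) = {ℓ})).card : ℝ) /
      ((Fintype.card (Fin L → Fin s → Fin m) : ℝ)) ≤
    (1 - ((Finset.univ.filter (fun i => x i = false ∧ y i = true)).card : ℝ) / (m : ℝ)) ^ s := by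
  classical
  set t := (Finset.univ.filter (fun i => x i = false ∧ y i = true)).card with ht_def
  set a := (Finset.univ.filter (fun i : Fin m => x i = true ∧ y i = true)).card with ha_def
  set c := (Finset.univ.filter (fun i : Fin m => y i = true)).card with hc_def
  -- t + a = c
  have hsum : t + a = c := by
    rw [ht_def, ha_def, hc_def, ← Finset.card_union_of_disjoint]
    · congr 1
      ext i
      cases hx : x i <;> simp [hx]
    · rw [Finset.disjoint_left]
      intro i h1 h2
      rw [Finset.mem_filter] at h1 h2
      rw [h1.2.1] at h2
      exact Bool.false_ne_true h2.2.1
  have hac : a ≤ c := by omega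
  have hcm : c ≤ m := by
    rw [hc_def]
    calc (Finset.univ.filter (fun i : Fin m => y i = true)).card
        ≤ Finset.univ.card := Finset.card_filter_le _ _
      _ = m := by rw [Finset.card_univ, Fintype.card_fin]
  have htm : t ≤ m := by omega
  have hm' : (0:ℝ) < m := by exact_mod_cast hm
  rcases Nat.eq_zero_or_pos L with hL0 | hLpos
  · -- L = 0 : event is empty
    subst hL0
    have hempty : (Finset.univ.filter (fun T : Fin 0 → Fin s → Fin m =>
        ∃ ℓ : Fin 0,
          Finset.univ.filter (fun ℓ' : Fin 0 => ∀ j, x (T ℓ' j) = true) = {ℓ} ∧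
          Finset.univ.filter (fun ℓ' : Fin 0 => ∀ j, y (T ℓ' j) = true) = {ℓ})) = ∅ := by
      apply Finset.filter_eq_empty_iff.mpr
      intro T _
      rintro ⟨ℓ, -⟩
      exact ℓ.elim0
    rw [hempty]
    simp only [Finset.card_empty, Nat.cast_zero, zero_div]
    apply pow_nonneg
    have : (t:ℝ) ≤ m := by exact_mod_cast htm
    have : (t:ℝ)/m ≤ 1 := by rw [div_le_one hm']; exact this
    linarith
  · -- main case
    rw [count_event]
    have hcardfun : Fintype.card (Fin L → Fin s → Fin m) = (m^s)^L := by
      rw [Fintype.card_fun, Fintype.card_fun, Fintype.card_fin, Fintype.card_fin, Fintype.card_fin]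
    rw [hcardfun]
    -- identify R and Q cards
    have hR : (Finset.univ.filter (fun g : Fin s → Fin m =>
            (∀ j, x (g j) = true) ∧ (∀ j, y (g j) = true))).card = a ^ s := by
      have heq : (Finset.univ.filter (fun g : Fin s → Fin m =>
            (∀ j, x (g j) = true) ∧ (∀ j, y (g j) = true)))
          = (Finset.univ.filter (fun g : Fin s → Fin m =>
            ∀ j, x (g j) = true ∧ y (g j) = true)) := by
        apply Finset.filter_congr
        intro g _
        constructor
        · rintro ⟨h1, h2⟩ j; exact ⟨h1 j, h2 j⟩
        · intro h; exact ⟨fun j => (h j).1, fun j => (h j).2⟩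
      rw [heq]
      exact card_sat m s (fun i => x i = true ∧ y i = true)
    have hCsat : (Finset.univ.filter (fun g : Fin s → Fin m => ∀ j, y (g j) = true)).card = c ^ s :=
      card_sat m s (fun i => y i = true)
    have hQle : (Finset.univ.filter (fun g : Fin s → Fin m =>
            ¬(∀ j, x (g j) = true) ∧ ¬(∀ j, y (g j) = true))).card + c ^ s ≤ m ^ s := by
      have hsub : (Finset.univ.filter (fun g : Fin s → Fin m =>
            ¬(∀ j, x (g j) = true) ∧ ¬(∀ j, y (g j) = true)))
          ⊆ (Finset.univ.filter (fun g : Fin s → Fin m => ¬(∀ j, y (g j) = true))) := by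
        intro g hg
        rw [Finset.mem_filter] at hg ⊢
        exact ⟨hg.1, hg.2.2⟩
      have hcompl := Finset.card_filter_add_card_filter_not
        (s := (Finset.univ : Finset (Fin s → Fin m))) (p := fun g => ∀ j, y (g j) = true)
      rw [Finset.card_univ, Fintype.card_fun, Fintype.card_fin, Fintype.card_fin, hCsat] at hcompl
      have hlee := Finset.card_le_card hsub
      linarith
    set qq := (Finset.univ.filter (fun g : Fin s → Fin m =>
            ¬(∀ j, x (g j) = true) ∧ ¬(∀ j, y (g j) = true))).card with hqq_def
    have ht_real : (t:ℝ) = (c:ℝ) - (a:ℝ) := by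
      have h1 : (t:ℝ) + (a:ℝ) = (c:ℝ) := by exact_mod_cast hsum
      linarith
    have hq_real : (qq:ℝ) ≤ (m:ℝ)^s - (c:ℝ)^s := by
      have h1 : (qq:ℝ) + (c:ℝ)^s ≤ (m:ℝ)^s := by exact_mod_cast hQle
      linarith
    have hmain := final_bound m s L a c t qq hm hLpos hac hcm ht_real hq_real
    rw [hR]
    push_cast at hmain ⊢
    convert hmain using 2
end

section
/- Let n be a positive integer divisible by 100 and let K > 0 be a real number. Let x, y ∈ {0,1}^n with x ≤ y coordinatewise and with Hamming weights |x|, |y| ∈ [n/2 − 10K, n/2 + 10K]. Let A be a uniformly random subset of [n] of size n/100. Then Pr_A[ |{i ∈ A : x_i = 1}| < n/200 − K and |{i ∈ A : y_i = 1}| > n/200 + K ] ≤ 2^{−2K}. -/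
open Finset

lemma aux_choose_ratio (n k : ℕ) (hkn : k ≤ n) :
    ∀ m, m ≤ k → Nat.choose (n - m) (k - m) * n ^ m ≤ Nat.choose n k * k ^ m := by
  intro m
  induction m with
  | zero => simp
  | succ m ih =>
    intro hm
    have hmk : m < k := Nat.lt_of_succ_le hm
    have ihm := ih (le_of_lt hmk)
    have ha : 0 < n - m := by omega
    have base := Nat.add_one_mul_choose_eq (n - m - 1) (k - m - 1)
    have e1 : n - m - 1 + 1 = n - m := by omega
    have e2 : k - m - 1 + 1 = k - m := by omega
    rw [e1, e2] at base
    -- base : (n-m) * C(n-m-1, k-m-1) = C(n-m, k-m) * (k-m)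
    have hbn : (k - m) * n ≤ k * (n - m) := by
      calc (k - m) * n = (k - m) * ((n - m) + m) := by rw [Nat.sub_add_cancel (by omega)]
        _ = (k - m) * (n - m) + (k - m) * m := by ring
        _ ≤ (k - m) * (n - m) + m * (n - m) := by
            have : (k - m) * m ≤ m * (n - m) := by
              rw [mul_comm]
              exact Nat.mul_le_mul_left m (by omega)
            omega
        _ = ((k - m) + m) * (n - m) := by ring
        _ = k * (n - m) := by rw [Nat.sub_add_cancel (by omega)]
    have key : Nat.choose (n - m - 1) (k - m - 1) * n ≤ k * Nat.choose (n - m) (k - m) := by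
      apply Nat.le_of_mul_le_mul_right _ ha
      calc Nat.choose (n - m - 1) (k - m - 1) * n * (n - m)
          = ((n - m) * Nat.choose (n - m - 1) (k - m - 1)) * n := by ring
        _ = (Nat.choose (n - m) (k - m) * (k - m)) * n := by rw [base]
        _ = Nat.choose (n - m) (k - m) * ((k - m) * n) := by ring
        _ ≤ Nat.choose (n - m) (k - m) * (k * (n - m)) := Nat.mul_le_mul_left _ hbn
        _ = k * Nat.choose (n - m) (k - m) * (n - m) := by ring
    have es1 : n - (m + 1) = n - m - 1 := by omega
    have es2 : k - (m + 1) = k - m - 1 := by omega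
    calc Nat.choose (n - (m + 1)) (k - (m + 1)) * n ^ (m + 1)
        = (Nat.choose (n - m - 1) (k - m - 1) * n) * n ^ m := by rw [es1, es2]; ring
      _ ≤ (k * Nat.choose (n - m) (k - m)) * n ^ m := Nat.mul_le_mul_right _ key
      _ = k * (Nat.choose (n - m) (k - m) * n ^ m) := by ring
      _ ≤ k * (Nat.choose n k * k ^ m) := Nat.mul_le_mul_left _ ihm
      _ = Nat.choose n k * k ^ (m + 1) := by ring

lemma aux_card_supersets {α : Type*} [DecidableEq α] (s T : Finset α) (k : ℕ)
    (hT : T ⊆ s) (hkT : T.card ≤ k) :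
    ((Finset.powersetCard k s).filter (fun A => T ⊆ A)).card
      = Nat.choose (s.card - T.card) (k - T.card) := by
  rw [← Finset.card_sdiff_of_subset hT, ← Finset.card_powersetCard (k - T.card) (s \ T)]
  apply Finset.card_bij' (fun A _ => A \ T) (fun B _ => B ∪ T)
  · intro A hA
    simp only [Finset.mem_filter, Finset.mem_powersetCard] at hA ⊢
    obtain ⟨⟨hAs, hAc⟩, hTA⟩ := hA
    exact ⟨Finset.sdiff_subset_sdiff hAs le_rfl, by rw [Finset.card_sdiff_of_subset hTA, hAc]⟩
  · intro B hB
    rw [Finset.mem_powersetCard] at hB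
    obtain ⟨hBs, hBc⟩ := hB
    have hdisj : Disjoint B T := (Finset.sdiff_disjoint.mono_left hBs)
    simp only [Finset.mem_filter, Finset.mem_powersetCard]
    refine ⟨⟨?_, ?_⟩, Finset.subset_union_right⟩
    · exact Finset.union_subset (hBs.trans (Finset.sdiff_subset)) hT
    · rw [Finset.card_union_of_disjoint hdisj, hBc, Nat.sub_add_cancel hkT]
  · intro A hA
    simp only [Finset.mem_filter] at hA
    exact Finset.sdiff_union_of_subset hA.2
  · intro B hB
    rw [Finset.mem_powersetCard] at hB
    have hdisj : Disjoint B T := (Finset.sdiff_disjoint.mono_left hB.1)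
    exact Finset.union_sdiff_cancel_right hdisj

lemma aux_pow_self_le_exp_mul_factorial (m : ℕ) :
    (m : ℝ) ^ m ≤ Real.exp m * m.factorial := by
  have h := Real.sum_le_exp_of_nonneg (x := (m : ℝ)) (Nat.cast_nonneg m) (m + 1)
  have hterm : (m : ℝ) ^ m / m.factorial ≤ ∑ i ∈ Finset.range (m + 1), (m : ℝ) ^ i / i.factorial := by
    exact Finset.single_le_sum (f := fun i => (m : ℝ) ^ i / (Nat.factorial i : ℝ))
      (fun i _ => by positivity) (Finset.self_mem_range_succ m)
  have hf : (0 : ℝ) < m.factorial := by positivity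
  have := hterm.trans h
  rw [div_le_iff₀ hf] at this
  linarith




/-- Let `n` be a positive integer divisible by 100 and `K > 0` real.
Let `x ≤ y` in `{0,1}^n` with Hamming weights in `[n/2 − 10K, n/2 + 10K]`, and let `A`
be a uniformly random subset of `[n]` of size `n/100`.  Then the probability that
`|{i ∈ A : x_i = 1}| < n/200 − K` and `|{i ∈ A : y_i = 1}| > n/200 + K` is at most
`2^{−2K}`. -/
theorem random_coordinates_weight_jump_bound (n : ℕ) (hn : 0 < n) (h100 : 100 ∣ n)
    (K : ℝ) (hK : 0 < K)
    (x y : Fin n → Bool) (hxy : ∀ i, x i = true → y i = true)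
    (hxlo : (n : ℝ) / 2 - 10 * K ≤ ((Finset.univ.filter (fun i => x i = true)).card : ℝ))
    (hxhi : ((Finset.univ.filter (fun i => x i = true)).card : ℝ) ≤ (n : ℝ) / 2 + 10 * K)
    (hylo : (n : ℝ) / 2 - 10 * K ≤ ((Finset.univ.filter (fun i => y i = true)).card : ℝ))
    (hyhi : ((Finset.univ.filter (fun i => y i = true)).card : ℝ) ≤ (n : ℝ) / 2 + 10 * K) :
    (((Finset.powersetCard (n / 100) (Finset.univ : Finset (Fin n))).filter
        (fun A => ((A.filter (fun i => x i = true)).card : ℝ) < (n : ℝ) / 200 - K ∧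
          (n : ℝ) / 200 + K < ((A.filter (fun i => y i = true)).card : ℝ))).card : ℝ) /
      (((Finset.powersetCard (n / 100) (Finset.univ : Finset (Fin n))).card : ℝ)) ≤
    (2 : ℝ) ^ (-(2 * K)) := by
  classical
  set k := n / 100 with hkdef
  have hnk : n = 100 * k := (Nat.mul_div_cancel' h100).symm
  have hk : 0 < k := by omega
  have hkn : k ≤ n := by omega
  set m := Nat.floor (2 * K) + 1 with hmdef
  have hKm : 2 * K < (m : ℝ) := by
    rw [hmdef]; push_cast; exact Nat.lt_floor_add_one (2 * K)
  set S := Finset.univ.filter (fun i => x i = false ∧ y i = true) with hSdef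
  set bad := (Finset.powersetCard k (Finset.univ : Finset (Fin n))).filter
      (fun A => ((A.filter (fun i => x i = true)).card : ℝ) < (n : ℝ) / 200 - K ∧
        (n : ℝ) / 200 + K < ((A.filter (fun i => y i = true)).card : ℝ)) with hbaddef
  have hrhs_nonneg : (0 : ℝ) ≤ (2 : ℝ) ^ (-(2 * K)) := le_of_lt (Real.rpow_pos_of_pos (by norm_num) _)
  have hbadS : ∀ A ∈ bad, m ≤ (A.filter (fun i => x i = false ∧ y i = true)).card ∧
      A.card = k := by
    intro A hA
    rw [hbaddef, Finset.mem_filter, Finset.mem_powersetCard] at hA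
    obtain ⟨⟨hAs, hAc⟩, hx', hy'⟩ := hA
    have hsub : A.filter (fun i => y i = true) ⊆
        A.filter (fun i => x i = true) ∪ A.filter (fun i => x i = false ∧ y i = true) := by
      intro i hi
      simp only [Finset.mem_filter, Finset.mem_union] at hi ⊢
      rcases Bool.eq_false_or_eq_true (x i) with h | h
      · exact Or.inl ⟨hi.1, h⟩
      · exact Or.inr ⟨hi.1, h, hi.2⟩
    have hcard := (Finset.card_le_card hsub).trans (Finset.card_union_le _ _)
    have h2K : 2 * K < ((A.filter (fun i => x i = false ∧ y i = true)).card : ℝ) := by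
      have : ((A.filter (fun i => y i = true)).card : ℝ) ≤
          ((A.filter (fun i => x i = true)).card : ℝ) +
          ((A.filter (fun i => x i = false ∧ y i = true)).card : ℝ) := by
        exact_mod_cast hcard
      linarith
    have := (Nat.floor_lt (by positivity)).2 h2K
    exact ⟨by omega, hAc⟩
  by_cases hmk : m ≤ k
  · -- main case
    have hsubset : bad ⊆ (Finset.powersetCard m S).biUnion
        (fun T => (Finset.powersetCard k (Finset.univ : Finset (Fin n))).filter
          (fun A => T ⊆ A)) := by
      intro A hA
      obtain ⟨hms, hAc⟩ := hbadS A hA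
      obtain ⟨T, hTsub, hTcard⟩ := Finset.exists_subset_card_eq hms
      rw [Finset.mem_biUnion]
      refine ⟨T, ?_, ?_⟩
      · rw [Finset.mem_powersetCard]
        exact ⟨hTsub.trans (Finset.filter_subset_filter _ (Finset.subset_univ A)), hTcard⟩
      · rw [Finset.mem_filter]
        have hAmem : A ∈ Finset.powersetCard k (Finset.univ : Finset (Fin n)) :=
          (Finset.mem_filter.1 hA).1
        exact ⟨hAmem, hTsub.trans (Finset.filter_subset _ _)⟩
    have hcount : bad.card ≤ Nat.choose S.card m * Nat.choose (n - m) (k - m) := by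
      calc bad.card ≤ ((Finset.powersetCard m S).biUnion
            (fun T => (Finset.powersetCard k (Finset.univ : Finset (Fin n))).filter
              (fun A => T ⊆ A))).card := Finset.card_le_card hsubset
        _ ≤ ∑ T ∈ Finset.powersetCard m S,
              ((Finset.powersetCard k (Finset.univ : Finset (Fin n))).filter
                (fun A => T ⊆ A)).card := Finset.card_biUnion_le
        _ = ∑ T ∈ Finset.powersetCard m S, Nat.choose (n - m) (k - m) := by
            apply Finset.sum_congr rfl
            intro T hT
            rw [Finset.mem_powersetCard] at hT
            rw [aux_card_supersets _ _ _ (Finset.subset_univ T) (hT.2 ▸ hmk), hT.2,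
              Finset.card_univ, Fintype.card_fin]
        _ = (Finset.powersetCard m S).card * Nat.choose (n - m) (k - m) := by
            rw [Finset.sum_const, smul_eq_mul]
        _ = Nat.choose S.card m * Nat.choose (n - m) (k - m) := by
            rw [Finset.card_powersetCard]
    have hratio : Nat.choose (n - m) (k - m) * 100 ^ m ≤ Nat.choose n k := by
      have h := aux_choose_ratio n k hkn m hmk
      have hpow : n ^ m = 100 ^ m * k ^ m := by rw [hnk, mul_pow]
      rw [hpow] at h
      have hkm : 0 < k ^ m := Nat.pow_pos hk
      apply Nat.le_of_mul_le_mul_right _ hkm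
      calc Nat.choose (n - m) (k - m) * 100 ^ m * k ^ m
          = Nat.choose (n - m) (k - m) * (100 ^ m * k ^ m) := by ring
        _ ≤ Nat.choose n k * k ^ m := h
    have hNat : bad.card * 100 ^ m ≤ Nat.choose S.card m * Nat.choose n k := by
      calc bad.card * 100 ^ m
          ≤ Nat.choose S.card m * Nat.choose (n - m) (k - m) * 100 ^ m :=
            Nat.mul_le_mul_right _ hcount
        _ = Nat.choose S.card m * (Nat.choose (n - m) (k - m) * 100 ^ m) := by ring
        _ ≤ Nat.choose S.card m * Nat.choose n k := Nat.mul_le_mul_left _ hratio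
    -- bound on S.card
    have hsx : Finset.univ.filter (fun i => x i = true) ⊆
        Finset.univ.filter (fun i => y i = true) := by
      intro i hi
      simp only [Finset.mem_filter, Finset.mem_univ, true_and] at hi ⊢
      exact hxy i hi
    have hSeq : S = (Finset.univ.filter (fun i => y i = true)) \
        (Finset.univ.filter (fun i => x i = true)) := by
      ext i
      simp only [hSdef, Finset.mem_filter, Finset.mem_sdiff, Finset.mem_univ, true_and,
        Bool.not_eq_true]
      tauto
    have hscard : (S.card : ℝ) ≤ 20 * K := by
      have hle := Finset.card_le_card hsx
      have : S.card = (Finset.univ.filter (fun i => y i = true)).card -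
          (Finset.univ.filter (fun i => x i = true)).card := by
        rw [hSeq, Finset.card_sdiff_of_subset hsx]
      rw [this, Nat.cast_sub hle]
      linarith
    -- choose bound
    have hdesc := Nat.descFactorial_le_pow S.card m
    rw [Nat.descFactorial_eq_factorial_mul_choose] at hdesc
    have hfacpos : (0 : ℝ) < (m.factorial : ℝ) := by positivity
    have hCs : (Nat.choose S.card m : ℝ) ≤ (10 * Real.exp 1) ^ m := by
      have h1 : (m.factorial : ℝ) * (Nat.choose S.card m : ℝ) ≤ (S.card : ℝ) ^ m := by
        exact_mod_cast hdesc
      have h2 : (S.card : ℝ) ≤ 10 * (m : ℝ) := by linarith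
      have h3 : (S.card : ℝ) ^ m ≤ (10 * (m : ℝ)) ^ m :=
        pow_le_pow_left₀ (Nat.cast_nonneg _) h2 m
      have h4 : ((m : ℝ)) ^ m ≤ Real.exp 1 ^ m * m.factorial := by
        have := aux_pow_self_le_exp_mul_factorial m
        rwa [← Real.exp_one_pow] at this
      have h5 : (10 * (m : ℝ)) ^ m = 10 ^ m * (m : ℝ) ^ m := by rw [mul_pow]
      have h6 : (m.factorial : ℝ) * (Nat.choose S.card m : ℝ) ≤
          10 ^ m * (Real.exp 1 ^ m * m.factorial) := by
        calc (m.factorial : ℝ) * (Nat.choose S.card m : ℝ) ≤ (S.card : ℝ) ^ m := h1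
          _ ≤ (10 * (m : ℝ)) ^ m := h3
          _ = 10 ^ m * (m : ℝ) ^ m := h5
          _ ≤ 10 ^ m * (Real.exp 1 ^ m * m.factorial) := by
              exact mul_le_mul_of_nonneg_left h4 (by positivity)
      have h7 : 10 ^ m * (Real.exp 1 ^ m * (m.factorial : ℝ)) =
          ((10 * Real.exp 1) ^ m) * m.factorial := by rw [mul_pow]; ring
      rw [h7] at h6
      apply le_of_mul_le_mul_right _ hfacpos
      calc (Nat.choose S.card m : ℝ) * m.factorial
          = (m.factorial : ℝ) * (Nat.choose S.card m : ℝ) := mul_comm _ _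
        _ ≤ ((10 * Real.exp 1) ^ m) * m.factorial := h6
    -- final probability bound pieces
    have hexp : Real.exp 1 / 10 ≤ 1 / 2 := by
      have := Real.exp_one_lt_d9
      linarith
    have hkey : (Nat.choose S.card m : ℝ) / 100 ^ m ≤ (2 : ℝ) ^ (-(2 * K)) := by
      have hA : (Nat.choose S.card m : ℝ) / 100 ^ m ≤ (Real.exp 1 / 10) ^ m := by
        rw [div_le_iff₀ (by positivity)]
        calc (Nat.choose S.card m : ℝ) ≤ (10 * Real.exp 1) ^ m := hCs
          _ = (Real.exp 1 / 10) ^ m * 100 ^ m := by rw [← mul_pow]; ring_nf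
      have hB : (Real.exp 1 / 10) ^ m ≤ (1 / 2 : ℝ) ^ m :=
        pow_le_pow_left₀ (by positivity) hexp m
      have hC : ((1 / 2 : ℝ)) ^ m = (1 / 2 : ℝ) ^ ((m : ℕ) : ℝ) :=
        (Real.rpow_natCast _ m).symm
      have hD : (1 / 2 : ℝ) ^ ((m : ℕ) : ℝ) ≤ (1 / 2 : ℝ) ^ (2 * K) :=
        Real.rpow_le_rpow_of_exponent_ge (by norm_num) (by norm_num) (le_of_lt hKm)
      have hE : (1 / 2 : ℝ) ^ (2 * K) = (2 : ℝ) ^ (-(2 * K)) := by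
        rw [Real.rpow_neg (by norm_num), ← Real.inv_rpow (by norm_num)]
        norm_num
      calc (Nat.choose S.card m : ℝ) / 100 ^ m ≤ (Real.exp 1 / 10) ^ m := hA
        _ ≤ (1 / 2 : ℝ) ^ m := hB
        _ = (1 / 2 : ℝ) ^ ((m : ℕ) : ℝ) := hC
        _ ≤ (1 / 2 : ℝ) ^ (2 * K) := hD
        _ = (2 : ℝ) ^ (-(2 * K)) := hE
    -- assemble
    have hden : ((Finset.powersetCard k (Finset.univ : Finset (Fin n))).card : ℝ) =
        (Nat.choose n k : ℝ) := by
      rw [Finset.card_powersetCard, Finset.card_univ, Fintype.card_fin]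
    have hNpos : (0 : ℝ) < (Nat.choose n k : ℝ) := by
      exact_mod_cast Nat.choose_pos hkn
    rw [hden, div_le_iff₀ hNpos]
    have hNatR : (bad.card : ℝ) * 100 ^ m ≤
        (Nat.choose S.card m : ℝ) * (Nat.choose n k : ℝ) := by exact_mod_cast hNat
    have h100pos : (0 : ℝ) < 100 ^ m := by positivity
    calc (bad.card : ℝ)
        ≤ (Nat.choose S.card m : ℝ) * (Nat.choose n k : ℝ) / 100 ^ m := by
          rw [le_div_iff₀ h100pos]; exact hNatR
      _ = ((Nat.choose S.card m : ℝ) / 100 ^ m) * (Nat.choose n k : ℝ) := by ring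
      _ ≤ (2 : ℝ) ^ (-(2 * K)) * (Nat.choose n k : ℝ) := by
          exact mul_le_mul_of_nonneg_right hkey (le_of_lt hNpos)
  · -- degenerate case : m > k, bad is empty
    have hbad : bad = ∅ := by
      rw [Finset.eq_empty_iff_forall_notMem]
      intro A hA
      obtain ⟨hms, hAc⟩ := hbadS A hA
      have := (Finset.card_filter_le A (fun i => x i = false ∧ y i = true))
      omega
    rw [hbad]
    simp only [Finset.card_empty, Nat.cast_zero, zero_div]
    exact hrhs_nonneg
end

section
/- Let n be a positive integer, let A ⊆ [n], let C := [n] \ A, let L be a positive integer, let T_1,…,T_L be subsets of C, and let s_1,…,s_L ∈ {0,1}^A. For x ∈ {0,1}^n write x_A and x_C for the restrictions of x to A and C, and let S_T(x_C) := {ℓ ∈ [L] : x_i = 1 for all i ∈ T_ℓ}. Define f : {0,1}^n → {0,1} by: f(x) = 1 if |S_T(x_C)| ≥ 2; f(x) = 1 if S_T(x_C) = {ℓ} and x_A = s_ℓ; and f(x) = 0 otherwise. Then f is union-closed. -/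
/-! The set `S(x)` of clauses `T ℓ` satisfied by `x` grows when `x` grows, so
`S(x), S(y) ⊆ S(x ∪ y)`, and both are nonempty when `f x = f y = 1`. If `S(x ∪ y)` has two
elements, `f (x ∪ y) = 1` outright. Otherwise `S(x) = S(y) = S(x ∪ y) = {ℓ}`, so `x` and `y`
both agree with `s ℓ` on `A`, and hence so does `x ∪ y`. -/

open Finset

section SatisfiedClauses

variable {ι α : Type*} [Fintype ι]

def satisfiedClauses (T : ι → Finset α) (x : α → Bool) : Finset ι :=
  univ.filter fun ℓ => ∀ i ∈ T ℓ, x i = true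

theorem satisfiedClauses_mono (T : ι → Finset α) {x z : α → Bool}
    (hxz : ∀ i, x i = true → z i = true) : satisfiedClauses T x ⊆ satisfiedClauses T z := by
  intro ℓ hℓ
  simp only [satisfiedClauses, mem_filter, mem_univ, true_and] at hℓ ⊢
  exact fun i hi => hxz i (hℓ i hi)

theorem satisfiedClauses_subset_or_left (T : ι → Finset α) (x y : α → Bool) :
    satisfiedClauses T x ⊆ satisfiedClauses T (fun i => x i || y i) :=
  satisfiedClauses_mono T fun i hi => by simp [hi]

theorem satisfiedClauses_subset_or_right (T : ι → Finset α) (x y : α → Bool) :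
    satisfiedClauses T y ⊆ satisfiedClauses T (fun i => x i || y i) :=
  satisfiedClauses_mono T fun i hi => by simp [hi]

/-- Over `Fin n` the filter elaborates with `Nat.decidableForallFin`, not the instance in
`satisfiedClauses`, so the two are equal but not syntactically. -/
theorem filter_eq_satisfiedClauses (T : ι → Finset α) (x : α → Bool)
    [DecidablePred fun ℓ => ∀ i ∈ T ℓ, x i = true] :
    univ.filter (fun ℓ => ∀ i ∈ T ℓ, x i = true) = satisfiedClauses T x := by
  unfold satisfiedClauses
  congr

end SatisfiedClauses

theorem yes_function_is_union_closed_general (n : ℕ) (A : Finset (Fin n)) (L : ℕ)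
    (T : Fin L → Finset (Fin n))
    (s : Fin L → Fin n → Bool)
    (f : (Fin n → Bool) → Bool)
    (h2 : ∀ x : Fin n → Bool,
      2 ≤ (Finset.univ.filter (fun ℓ : Fin L => ∀ i ∈ T ℓ, x i = true)).card → f x = true)
    (h1 : ∀ (x : Fin n → Bool) (ℓ : Fin L),
      Finset.univ.filter (fun ℓ' : Fin L => ∀ i ∈ T ℓ', x i = true) = {ℓ} →
      (f x = true ↔ ∀ i ∈ A, x i = s ℓ i))
    (h0 : ∀ x : Fin n → Bool,
      Finset.univ.filter (fun ℓ : Fin L => ∀ i ∈ T ℓ, x i = true) = ∅ → f x = false) :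
    ∀ x y : Fin n → Bool, f x = true → f y = true → f (fun i => x i || y i) = true := by
  simp only [filter_eq_satisfiedClauses] at h0 h1 h2
  have satisfied_nonempty : ∀ w, f w = true → (satisfiedClauses T w).Nonempty :=
    fun w hw => nonempty_iff_ne_empty.2 fun h => by simp [h0 w h] at hw
  intro x y hx hy
  have hSx := satisfiedClauses_subset_or_left T x y
  have hSy := satisfiedClauses_subset_or_right T x y
  rcases ((satisfied_nonempty x hx).mono hSx).exists_eq_singleton_or_nontrivial with
    ⟨ℓ, hℓ⟩ | hnontrivial
  · rw [hℓ] at hSx hSy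
    have hxA := (h1 x ℓ ((satisfied_nonempty x hx).subset_singleton_iff.1 hSx)).1 hx
    have hyA := (h1 y ℓ ((satisfied_nonempty y hy).subset_singleton_iff.1 hSy)).1 hy
    exact (h1 _ ℓ hℓ).2 fun i hi => by simp [hxA i hi, hyA i hi]
  · exact h2 _ (one_lt_card_iff_nontrivial.2 hnontrivial)

/-- The yes-functions in the union-closedness lower bound construction are
union-closed.  Here `A ⊆ [n]`, `C = [n] \ A`, `T_ℓ ⊆ C` for each `ℓ ∈ [L]`, and
`s_ℓ ∈ {0,1}^A` (encoded as a function on all of `Fin n`; only its values on `A` are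
used).  `S_T(x_C) = {ℓ : x_i = 1 for all i ∈ T_ℓ}`, and `f(x) = 1` iff
`|S_T(x_C)| ≥ 2`, or `S_T(x_C) = {ℓ}` and `x_A = s_ℓ`.  Then `f` is union-closed. -/
theorem yes_function_is_union_closed (n : ℕ) (A : Finset (Fin n)) (L : ℕ) (hL : 0 < L)
    (T : Fin L → Finset (Fin n)) (hT : ∀ ℓ, T ℓ ⊆ Aᶜ)
    (s : Fin L → Fin n → Bool)
    (f : (Fin n → Bool) → Bool)
    (h2 : ∀ x : Fin n → Bool,
      2 ≤ (Finset.univ.filter (fun ℓ : Fin L => ∀ i ∈ T ℓ, x i = true)).card → f x = true)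
    (h1 : ∀ (x : Fin n → Bool) (ℓ : Fin L),
      Finset.univ.filter (fun ℓ' : Fin L => ∀ i ∈ T ℓ', x i = true) = {ℓ} →
      (f x = true ↔ ∀ i ∈ A, x i = s ℓ i))
    (h0 : ∀ x : Fin n → Bool,
      Finset.univ.filter (fun ℓ : Fin L => ∀ i ∈ T ℓ, x i = true) = ∅ → f x = false) :
    ∀ x y : Fin n → Bool, f x = true → f y = true → f (fun i => x i || y i) = true :=
  yes_function_is_union_closed_general n A L T s f h2 h1 h0
end

section
/- Let f : {0,1}^n → {0,1} and ε > 0, and suppose dist_UC(f) ≥ ε. Then the set B := {z ∈ {0,1}^n : f(z) = 0 and there exist k ≥ 1 and x_1,…,x_k ∈ {0,1}^n with f(x_j) = 1 for every j and x_1 ∪ … ∪ x_k = z} has size |B| ≥ ε·2^n. Equivalently, f has at least ε·2^n pairwise end-distinct UC-violating tuples. -/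
/-- Normalized Hamming distance between two Boolean functions on `{0,1}^n`. -/
noncomputable def hamDist {n : ℕ} (f g : (Fin n → Bool) → Bool) : ℝ :=
  ((Finset.univ.filter (fun x => f x ≠ g x)).card : ℝ) / 2 ^ n

/-- A Boolean function is union-closed if `f(x) = f(y) = 1` implies `f(x ∪ y) = 1`,
where `∪` is bitwise OR. -/
def IsUnionClosed {n : ℕ} (g : (Fin n → Bool) → Bool) : Prop :=
  ∀ x y : Fin n → Bool, g x = true → g y = true → g (fun i => x i || y i) = true

/-- Distance from `f` to the property of being union-closed (the minimum of
`hamDist f g` over union-closed `g`). -/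
noncomputable def distUC {n : ℕ} (f : (Fin n → Bool) → Bool) : ℝ :=
  sInf (hamDist f '' {g | IsUnionClosed g})

/-- The "union of 1-points" predicate. -/
def IsUnionOfOnes {n : ℕ} (f : (Fin n → Bool) → Bool) (z : Fin n → Bool) : Prop :=
  ∃ (k : ℕ) (x : Fin k → (Fin n → Bool)), 0 < k ∧ (∀ j, f (x j) = true) ∧
    ∀ i, (z i = true ↔ ∃ j, x j i = true)

lemma isUnionOfOnes_union {n : ℕ} (f : (Fin n → Bool) → Bool) {a b : Fin n → Bool}
    (ha : IsUnionOfOnes f a) (hb : IsUnionOfOnes f b) :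
    IsUnionOfOnes f (fun i => a i || b i) := by
  obtain ⟨k1, x1, hk1, hf1, hu1⟩ := ha
  obtain ⟨k2, x2, hk2, hf2, hu2⟩ := hb
  refine ⟨k1 + k2, Fin.append x1 x2, by omega, ?_, ?_⟩
  · intro j
    refine Fin.addCases (fun j1 => ?_) (fun j2 => ?_) j
    · rw [Fin.append_left]; exact hf1 j1
    · rw [Fin.append_right]; exact hf2 j2
  · intro i
    simp only [Bool.or_eq_true, hu1 i, hu2 i]
    constructor
    · rintro (⟨j, hj⟩ | ⟨j, hj⟩)
      · exact ⟨Fin.castAdd k2 j, by rwa [Fin.append_left]⟩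
      · exact ⟨Fin.natAdd k1 j, by rwa [Fin.append_right]⟩
    · rintro ⟨j, hj⟩
      refine Fin.addCases (fun j1 hj1 => Or.inl ⟨j1, ?_⟩) (fun j2 hj2 => Or.inr ⟨j2, ?_⟩) j hj
      · rwa [Fin.append_left] at hj1
      · rwa [Fin.append_right] at hj2

/-- If `dist_UC(f) ≥ ε` then the set `B` of points `z` with `f(z) = 0`
that are unions `z = x_1 ∪ … ∪ x_k` of `1`-points of `f` (`k ≥ 1`) has size at least
`ε·2^n`; equivalently, `f` has at least `ε·2^n` pairwise end-distinct UC-violating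
tuples. -/
theorem many_end_distinct_violating_tuples (n : ℕ) (f : (Fin n → Bool) → Bool)
    (ε : ℝ) (hε : 0 < ε) (hdist : ε ≤ distUC f) :
    ε * 2 ^ n ≤
      (Set.ncard {z : Fin n → Bool | f z = false ∧
        ∃ (k : ℕ) (x : Fin k → (Fin n → Bool)), 0 < k ∧ (∀ j, f (x j) = true) ∧
          ∀ i, (z i = true ↔ ∃ j, x j i = true)} : ℝ) := by
  classical
  set g : (Fin n → Bool) → Bool := fun z => decide (IsUnionOfOnes f z) with hg
  have hgc : IsUnionClosed g := by
    intro x y hx hy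
    simp only [hg, decide_eq_true_eq] at *
    exact isUnionOfOnes_union f hx hy
  have hfg : ∀ z, f z = true → g z = true := by
    intro z hz
    simp only [hg, decide_eq_true_eq]
    exact ⟨1, fun _ => z, one_pos, fun _ => hz, fun i => by simp⟩
  -- distUC f ≤ hamDist f g
  have hle : distUC f ≤ hamDist f g := by
    apply csInf_le
    · refine ⟨0, ?_⟩
      rintro r ⟨h, _, rfl⟩
      exact div_nonneg (by positivity) (by positivity)
    · exact ⟨g, hgc, rfl⟩
  set B := {z : Fin n → Bool | f z = false ∧
        ∃ (k : ℕ) (x : Fin k → (Fin n → Bool)), 0 < k ∧ (∀ j, f (x j) = true) ∧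
          ∀ i, (z i = true ↔ ∃ j, x j i = true)} with hB
  have hset : (Finset.univ.filter (fun x => f x ≠ g x)) = B.toFinset := by
    ext z
    simp only [Finset.mem_filter, Finset.mem_univ, true_and, Set.mem_toFinset, hB,
      Set.mem_setOf_eq]
    constructor
    · intro h
      cases hfz : f z with
      | true => exact absurd ((hfg z hfz).trans hfz.symm) (Ne.symm h)
      | false =>
        refine ⟨rfl, ?_⟩
        have : g z = true := by
          cases hgz : g z with
          | true => rfl
          | false => exact absurd (hgz.trans hfz.symm) (Ne.symm h)
        have h' : IsUnionOfOnes f z := by simpa only [hg, decide_eq_true_eq] using this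
        exact h'
    · rintro ⟨hfz, hz⟩
      have : g z = true := by simp only [hg, decide_eq_true_eq]; exact hz
      rw [hfz, this]; simp
  have hcard : (Set.ncard B : ℝ) = ((Finset.univ.filter (fun x => f x ≠ g x)).card : ℝ) := by
    rw [hset, Set.ncard_eq_toFinset_card']
  have h2 : (0:ℝ) < 2 ^ n := by positivity
  have : ε ≤ (Set.ncard B : ℝ) / 2 ^ n := by
    rw [hcard]
    exact hdist.trans hle
  calc ε * 2 ^ n ≤ ((Set.ncard B : ℝ) / 2 ^ n) * 2 ^ n := by
        exact mul_le_mul_of_nonneg_right this h2.le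
    _ = (Set.ncard B : ℝ) := by field_simp
end

section
/- Let f : {0,1}^n → {0,1} and 0 < ε ≤ 1, let T := √(2n·ln(4/ε)), and define f_trunc : {0,1}^n → {0,1} by f_trunc(x) = 0 if |x| ≤ n/2 − T, f_trunc(x) = 1 if |x| ≥ n/2 + T, and f_trunc(x) = f(x) otherwise. Then: (1) if f is union-closed, then f_trunc is union-closed; and (2) if dist_UC(f) ≥ ε, then dist_UC(f_trunc) ≥ ε/2. -/
/-- Hamming weight of `x ∈ {0,1}^n`. -/
def wt {n : ℕ} (x : Fin n → Bool) : ℕ :=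
  (Finset.univ.filter (fun i => x i = true)).card

section Aux

lemma wt_mono {n : ℕ} (x y : Fin n → Bool) : wt x ≤ wt (fun i => x i || y i) := by
  apply Finset.card_le_card
  intro i hi
  simp only [Finset.mem_filter, Finset.mem_univ, true_and] at *
  simp [hi]

lemma hamDist_nonneg {n : ℕ} (f g : (Fin n → Bool) → Bool) : 0 ≤ hamDist f g := by
  unfold hamDist; positivity

lemma hamDist_triangle {n : ℕ} (f g h : (Fin n → Bool) → Bool) :
    hamDist f g ≤ hamDist f h + hamDist h g := by
  unfold hamDist
  rw [← add_div]
  apply div_le_div_of_nonneg_right ?_ (by positivity)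
  rw [← Nat.cast_add, Nat.cast_le]
  calc (Finset.univ.filter (fun x => f x ≠ g x)).card
      ≤ ((Finset.univ.filter (fun x => f x ≠ h x)) ∪ (Finset.univ.filter (fun x => h x ≠ g x))).card := by
        apply Finset.card_le_card
        intro x hx
        simp only [Finset.mem_filter, Finset.mem_union, Finset.mem_univ, true_and, ne_eq] at *
        by_contra hc
        push_neg at hc
        exact hx (hc.1.trans hc.2)
    _ ≤ _ := Finset.card_union_le _ _

lemma isUC_const_true {n : ℕ} : IsUnionClosed (fun _ : Fin n → Bool => true) :=
  fun _ _ _ _ => rfl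

lemma distUC_nonempty {n : ℕ} (f : (Fin n → Bool) → Bool) :
    (hamDist f '' {g | IsUnionClosed g}).Nonempty :=
  ⟨_, ⟨fun _ => true, isUC_const_true, rfl⟩⟩

lemma distUC_bddBelow {n : ℕ} (f : (Fin n → Bool) → Bool) :
    BddBelow (hamDist f '' {g | IsUnionClosed g}) := by
  refine ⟨0, ?_⟩
  rintro y ⟨g, _, rfl⟩
  exact hamDist_nonneg f g

lemma distUC_lipschitz {n : ℕ} (f h : (Fin n → Bool) → Bool) :
    distUC f ≤ hamDist f h + distUC h := by
  rw [distUC, ← sub_le_iff_le_add']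
  apply le_csInf (distUC_nonempty h)
  rintro y ⟨g, hg, rfl⟩
  have h1 : distUC f ≤ hamDist f g := csInf_le (distUC_bddBelow f) ⟨g, hg, rfl⟩
  rw [distUC] at h1
  have h2 := hamDist_triangle f g h
  linarith

lemma mgf_sum (n : ℕ) (lam : ℝ) :
    ∑ x : Fin n → Bool, Real.exp (lam * (wt x : ℝ)) = (Real.exp lam + 1) ^ n := by
  have h : ∀ x : Fin n → Bool,
      Real.exp (lam * (wt x : ℝ)) = ∏ i : Fin n, (if x i then Real.exp lam else 1) := by
    intro x
    have : lam * (wt x : ℝ) = ∑ i : Fin n, (if x i then lam else 0) := by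
      rw [Finset.sum_ite, Finset.sum_const, Finset.sum_const, wt]
      simp [mul_comm]
    rw [this, Real.exp_sum]
    apply Finset.prod_congr rfl
    intro i _
    by_cases hi : x i <;> simp [hi]
  simp_rw [h]
  rw [← Fintype.prod_sum (fun (_ : Fin n) (b : Bool) => if b then Real.exp lam else 1)]
  simp

lemma tail_up (n : ℕ) (a lam : ℝ) (hlam : 0 ≤ lam) :
    ((Finset.univ.filter (fun x : Fin n → Bool => a ≤ (wt x : ℝ))).card : ℝ)
      ≤ Real.exp (-(lam * a)) * (Real.exp lam + 1) ^ n := by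
  calc ((Finset.univ.filter (fun x : Fin n → Bool => a ≤ (wt x : ℝ))).card : ℝ)
      = ∑ _x ∈ Finset.univ.filter (fun x : Fin n → Bool => a ≤ (wt x : ℝ)), (1 : ℝ) := by simp
    _ ≤ ∑ x ∈ Finset.univ.filter (fun x : Fin n → Bool => a ≤ (wt x : ℝ)),
          Real.exp (lam * ((wt x : ℝ) - a)) := by
        apply Finset.sum_le_sum
        intro x hx
        simp only [Finset.mem_filter] at hx
        exact Real.one_le_exp (mul_nonneg hlam (by linarith [hx.2]))
    _ ≤ ∑ x : Fin n → Bool, Real.exp (lam * ((wt x : ℝ) - a)) := by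
        apply Finset.sum_le_sum_of_subset_of_nonneg (Finset.filter_subset _ _)
        intro x _ _
        exact (Real.exp_pos _).le
    _ = Real.exp (-(lam * a)) * ∑ x : Fin n → Bool, Real.exp (lam * (wt x : ℝ)) := by
        rw [Finset.mul_sum]
        apply Finset.sum_congr rfl
        intro x _
        rw [← Real.exp_add]
        ring_nf
    _ = _ := by rw [mgf_sum]

lemma tail_down (n : ℕ) (a lam : ℝ) (hlam : 0 ≤ lam) :
    ((Finset.univ.filter (fun x : Fin n → Bool => (wt x : ℝ) ≤ a)).card : ℝ)
      ≤ Real.exp (lam * a) * (Real.exp (-lam) + 1) ^ n := by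
  calc ((Finset.univ.filter (fun x : Fin n → Bool => (wt x : ℝ) ≤ a)).card : ℝ)
      = ∑ _x ∈ Finset.univ.filter (fun x : Fin n → Bool => (wt x : ℝ) ≤ a), (1 : ℝ) := by simp
    _ ≤ ∑ x ∈ Finset.univ.filter (fun x : Fin n → Bool => (wt x : ℝ) ≤ a),
          Real.exp (lam * (a - (wt x : ℝ))) := by
        apply Finset.sum_le_sum
        intro x hx
        simp only [Finset.mem_filter] at hx
        exact Real.one_le_exp (mul_nonneg hlam (by linarith [hx.2]))
    _ ≤ ∑ x : Fin n → Bool, Real.exp (lam * (a - (wt x : ℝ))) := by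
        apply Finset.sum_le_sum_of_subset_of_nonneg (Finset.filter_subset _ _)
        intro x _ _
        exact (Real.exp_pos _).le
    _ = Real.exp (lam * a) * ∑ x : Fin n → Bool, Real.exp ((-lam) * (wt x : ℝ)) := by
        rw [Finset.mul_sum]
        apply Finset.sum_congr rfl
        intro x _
        rw [← Real.exp_add]
        ring_nf
    _ = _ := by rw [mgf_sum]

lemma one_add_exp_le (lam : ℝ) :
    Real.exp lam + 1 ≤ 2 * Real.exp (lam / 2 + lam ^ 2 / 8) := by
  have hc : Real.cosh (lam / 2) ≤ Real.exp ((lam / 2) ^ 2 / 2) := Real.cosh_le_exp_half_sq _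
  have he : Real.exp lam + 1 = Real.exp (lam / 2) * (2 * Real.cosh (lam / 2)) := by
    have h2 : (2:ℝ) * Real.cosh (lam / 2) = Real.exp (lam / 2) + Real.exp (-(lam / 2)) := by
      rw [Real.cosh_eq]; ring
    rw [h2, mul_add, ← Real.exp_add, ← Real.exp_add, add_neg_cancel, Real.exp_zero, add_halves]
  rw [he, Real.exp_add]
  have : (lam / 2) ^ 2 / 2 = lam ^ 2 / 8 := by ring
  rw [← this]
  have := Real.exp_pos (lam / 2)
  nlinarith [Real.exp_pos ((lam/2)^2/2)]

lemma pow_exp_helper (u a c : ℝ) (n : ℕ) (h : a + n * u = c) :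
    Real.exp a * (2 * Real.exp u) ^ n = 2 ^ n * Real.exp c := by
  rw [mul_pow, ← Real.exp_nat_mul, ← h, Real.exp_add]; ring

end Aux

/-- Truncating `f` at the middle layers (with `T = √(2n·ln(4/ε))`,
setting the value to `0` below weight `n/2 − T`, to `1` above weight `n/2 + T`, and
keeping `f` in between) preserves union-closedness, and if `dist_UC(f) ≥ ε` then
`dist_UC(f_trunc) ≥ ε/2`. -/
theorem truncation_union_closed (n : ℕ) (f ftr : (Fin n → Bool) → Bool)
    (ε : ℝ) (hε0 : 0 < ε) (hε1 : ε ≤ 1)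
    (h0 : ∀ x : Fin n → Bool,
      (wt x : ℝ) ≤ (n : ℝ) / 2 - Real.sqrt (2 * n * Real.log (4 / ε)) → ftr x = false)
    (h1 : ∀ x : Fin n → Bool,
      (n : ℝ) / 2 + Real.sqrt (2 * n * Real.log (4 / ε)) ≤ (wt x : ℝ) → ftr x = true)
    (hmid : ∀ x : Fin n → Bool,
      (n : ℝ) / 2 - Real.sqrt (2 * n * Real.log (4 / ε)) < (wt x : ℝ) →
      (wt x : ℝ) < (n : ℝ) / 2 + Real.sqrt (2 * n * Real.log (4 / ε)) → ftr x = f x) :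
    (IsUnionClosed f → IsUnionClosed ftr) ∧ (ε ≤ distUC f → ε / 2 ≤ distUC ftr) := by
  set T : ℝ := Real.sqrt (2 * n * Real.log (4 / ε)) with hTdef
  constructor
  · -- union-closedness
    intro hf x y hx hy
    set z : Fin n → Bool := fun i => x i || y i with hz
    by_cases hzT : (n : ℝ) / 2 + T ≤ (wt z : ℝ)
    · exact h1 z hzT
    · push_neg at hzT
      have hxz : (wt x : ℝ) ≤ wt z := by exact_mod_cast wt_mono x y
      have hyz : (wt y : ℝ) ≤ wt z := by
        have : wt y ≤ wt z := by
          have := wt_mono y x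
          have hzz : wt z = wt (fun i => y i || x i) := by
            unfold wt; congr 1; apply Finset.filter_congr; intro i _
            simp [hz, Bool.or_comm]
          rw [hzz]; exact this
        exact_mod_cast this
      have hxlow : ¬ ((wt x : ℝ) ≤ (n : ℝ) / 2 - T) := by
        intro hc; rw [h0 x hc] at hx; exact Bool.false_ne_true hx
      have hylow : ¬ ((wt y : ℝ) ≤ (n : ℝ) / 2 - T) := by
        intro hc; rw [h0 y hc] at hy; exact Bool.false_ne_true hy
      push_neg at hxlow hylow
      have hfx : f x = true := by rw [← hmid x hxlow (lt_of_le_of_lt hxz hzT)]; exact hx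
      have hfy : f y = true := by rw [← hmid y hylow (lt_of_le_of_lt hyz hzT)]; exact hy
      have hfz := hf x y hfx hfy
      rw [hmid z (lt_of_lt_of_le hxlow hxz) hzT]
      exact hfz
  · -- distance
    intro hdf
    rcases Nat.eq_zero_or_pos n with hn | hn
    · -- n = 0 : contradiction from h0 and h1
      subst hn
      exfalso
      have hT0 : T = 0 := by
        rw [hTdef]; simp
      have x : Fin 0 → Bool := fun i => i.elim0
      have hw : (wt x : ℝ) = 0 := by
        have : wt x = 0 := by unfold wt; simp
        rw [this]; norm_num
      have hA := h0 x (by rw [hw, hT0]; norm_num)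
      have hB := h1 x (by rw [hw, hT0]; norm_num)
      rw [hA] at hB; exact Bool.false_ne_true hB
    · -- main case
      have hL : (0:ℝ) < Real.log (4 / ε) := by
        apply Real.log_pos
        rw [lt_div_iff₀ hε0]; linarith
      have hnR : (0:ℝ) < n := by exact_mod_cast hn
      have hTnn : 0 ≤ T := Real.sqrt_nonneg _
      have hT2 : T ^ 2 = 2 * n * Real.log (4 / ε) := by
        rw [hTdef, Real.sq_sqrt (by positivity)]
      set lam : ℝ := 4 * T / n with hlamdef
      have hlamnn : 0 ≤ lam := by positivity
      -- bound on each tail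
      have hexp_bound : Real.exp (-(2 * T ^ 2 / n)) = (ε / 4) ^ 4 := by
        have h4 : 2 * T ^ 2 / n = 4 * Real.log (4 / ε) := by
          rw [hT2]; field_simp; ring
        rw [h4]
        rw [show (4:ℝ) * Real.log (4/ε) = ((4:ℕ):ℝ) * Real.log (4/ε) by norm_num]
        rw [← Real.log_pow, Real.exp_neg, Real.exp_log (by positivity)]
        rw [← inv_pow, inv_div]
      have hcount : ∀ s : ℝ, Real.exp (-(lam * T) + (n : ℝ) * lam ^ 2 / 8)
          = Real.exp (-(2 * T ^ 2 / n)) := by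
        intro s
        congr 1
        rw [hlamdef]
        field_simp
        ring
      -- upper tail
      have hup : ((Finset.univ.filter
            (fun x : Fin n → Bool => (n:ℝ)/2 + T ≤ (wt x : ℝ))).card : ℝ)
          ≤ 2 ^ n * (ε / 4) ^ 4 := by
        calc ((Finset.univ.filter
              (fun x : Fin n → Bool => (n:ℝ)/2 + T ≤ (wt x : ℝ))).card : ℝ)
            ≤ Real.exp (-(lam * ((n:ℝ)/2 + T))) * (Real.exp lam + 1) ^ n :=
              tail_up n _ lam hlamnn
          _ ≤ Real.exp (-(lam * ((n:ℝ)/2 + T))) * (2 * Real.exp (lam/2 + lam^2/8)) ^ n := by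
              apply mul_le_mul_of_nonneg_left ?_ (Real.exp_pos _).le
              apply pow_le_pow_left₀ (by positivity) (one_add_exp_le lam)
          _ = 2 ^ n * Real.exp (-(lam * T) + (n:ℝ) * lam ^ 2 / 8) :=
              pow_exp_helper _ _ _ n (by push_cast; ring)
          _ = 2 ^ n * (ε / 4) ^ 4 := by rw [hcount 0, hexp_bound]
      -- lower tail
      have hdown : ((Finset.univ.filter
            (fun x : Fin n → Bool => (wt x : ℝ) ≤ (n:ℝ)/2 - T)).card : ℝ)
          ≤ 2 ^ n * (ε / 4) ^ 4 := by
        calc ((Finset.univ.filter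
              (fun x : Fin n → Bool => (wt x : ℝ) ≤ (n:ℝ)/2 - T)).card : ℝ)
            ≤ Real.exp (lam * ((n:ℝ)/2 - T)) * (Real.exp (-lam) + 1) ^ n :=
              tail_down n _ lam hlamnn
          _ ≤ Real.exp (lam * ((n:ℝ)/2 - T)) * (2 * Real.exp (-lam/2 + (-lam)^2/8)) ^ n := by
              apply mul_le_mul_of_nonneg_left ?_ (Real.exp_pos _).le
              apply pow_le_pow_left₀ (by positivity) (one_add_exp_le (-lam))
          _ = 2 ^ n * Real.exp (-(lam * T) + (n:ℝ) * lam ^ 2 / 8) :=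
              pow_exp_helper _ _ _ n (by push_cast; ring)
          _ = 2 ^ n * (ε / 4) ^ 4 := by rw [hcount 0, hexp_bound]
      -- disagreement set is inside the tails
      have hsub : (Finset.univ.filter (fun x : Fin n → Bool => f x ≠ ftr x))
          ⊆ (Finset.univ.filter (fun x : Fin n → Bool => (wt x : ℝ) ≤ (n:ℝ)/2 - T))
            ∪ (Finset.univ.filter (fun x : Fin n → Bool => (n:ℝ)/2 + T ≤ (wt x : ℝ))) := by
        intro x hx
        simp only [Finset.mem_filter, Finset.mem_union, Finset.mem_univ, true_and, ne_eq] at *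
        by_contra hc
        push_neg at hc
        exact hx ((hmid x hc.1 hc.2).symm)
      have hcard : ((Finset.univ.filter (fun x : Fin n → Bool => f x ≠ ftr x)).card : ℝ)
          ≤ 2 ^ n * (ε / 4) ^ 4 + 2 ^ n * (ε / 4) ^ 4 := by
        calc ((Finset.univ.filter (fun x : Fin n → Bool => f x ≠ ftr x)).card : ℝ)
            ≤ (((Finset.univ.filter (fun x : Fin n → Bool => (wt x : ℝ) ≤ (n:ℝ)/2 - T))
              ∪ (Finset.univ.filter (fun x : Fin n → Bool => (n:ℝ)/2 + T ≤ (wt x : ℝ)))).card : ℝ) := by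
              exact_mod_cast Finset.card_le_card hsub
          _ ≤ ((Finset.univ.filter (fun x : Fin n → Bool => (wt x : ℝ) ≤ (n:ℝ)/2 - T)).card : ℝ)
              + ((Finset.univ.filter (fun x : Fin n → Bool => (n:ℝ)/2 + T ≤ (wt x : ℝ))).card : ℝ) := by
              exact_mod_cast Finset.card_union_le _ _
          _ ≤ _ := add_le_add hdown hup
      have hham : hamDist f ftr ≤ ε / 2 := by
        unfold hamDist
        rw [div_le_iff₀ (by positivity)]
        calc ((Finset.univ.filter (fun x : Fin n → Bool => f x ≠ ftr x)).card : ℝ)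
            ≤ 2 ^ n * (ε / 4) ^ 4 + 2 ^ n * (ε / 4) ^ 4 := hcard
          _ = 2 ^ n * (ε ^ 4 / 128) := by ring
          _ ≤ 2 ^ n * (ε / 2) := by
              apply mul_le_mul_of_nonneg_left ?_ (by positivity)
              have h4 : ε ^ 4 ≤ ε := pow_le_of_le_one hε0.le hε1 (by norm_num)
              linarith
          _ = ε / 2 * 2 ^ n := by ring
      have hlip := distUC_lipschitz f ftr
      linarith
end

section
/- Let f : {0,1}^n → {0,1} and let τ_1,…,τ_M be UC-violating tuples for f whose augmentations are pairwise disjoint subsets of {0,1}^n (no point of {0,1}^n lies in the augmentations of two different tuples). Then there exist M pairwise disjoint UC-violating triples for f (no point of {0,1}^n appears in two different triples). Moreover, if all points of every τ_i have Hamming weight in an interval I ⊆ [0,n], then all points of the M triples also have Hamming weight in I. -/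
/-- The union (bitwise OR) of the points `x_1, …, x_k`. -/
def unionAll {n k : ℕ} (x : Fin k → (Fin n → Bool)) : Fin n → Bool :=
  fun i => decide (∃ j, x j i = true)

/-- The partial union `x_1 ∪ … ∪ x_{j+1}` (i.e. the union of the coordinates up to
index `j` in `Fin k`). -/
def punion {n k : ℕ} (x : Fin k → (Fin n → Bool)) (j : Fin k) : Fin n → Bool :=
  fun i => decide (∃ j' : Fin k, j' ≤ j ∧ x j' i = true)

/-- `(x_1, …, x_k, x_1 ∪ … ∪ x_k)` is a UC-violating tuple for `f`: `k ≥ 1`,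
`f(x_j) = 1` for all `j`, and `f(x_1 ∪ … ∪ x_k) = 0`. -/
def IsUCTuple {n : ℕ} (f : (Fin n → Bool) → Bool) {k : ℕ}
    (x : Fin k → (Fin n → Bool)) : Prop :=
  0 < k ∧ (∀ j, f (x j) = true) ∧ f (unionAll x) = false

/-- The augmentation of the tuple `(x_1, …, x_k)`: the points `x_1, …, x_k` together
with all partial unions `x_1 ∪ … ∪ x_j` for `2 ≤ j ≤ k`. -/
def augmentation {n k : ℕ} (x : Fin k → (Fin n → Bool)) : Set (Fin n → Bool) :=
  Set.range x ∪ {z | ∃ j : Fin k, 1 ≤ (j : ℕ) ∧ z = punion x j}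

/-- The points of the tuple `(x_1, …, x_k, x_1 ∪ … ∪ x_k)`. -/
def tuplePoints {n k : ℕ} (x : Fin k → (Fin n → Bool)) : Set (Fin n → Bool) :=
  Set.range x ∪ {unionAll x}

/-- `(u, v, w)` is a UC-violating triple for `f`: `w = u ∪ v`, `f(u) = f(v) = 1`,
`f(w) = 0`. -/
def IsUCTriple {n : ℕ} (f : (Fin n → Bool) → Bool)
    (t : (Fin n → Bool) × (Fin n → Bool) × (Fin n → Bool)) : Prop :=
  t.2.2 = (fun i => t.1 i || t.2.1 i) ∧ f t.1 = true ∧ f t.2.1 = true ∧ f t.2.2 = false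

/-- The points of a triple. -/
def triplePoints {n : ℕ} (t : (Fin n → Bool) × (Fin n → Bool) × (Fin n → Bool)) :
    Set (Fin n → Bool) := {t.1, t.2.1, t.2.2}

/-!
Along a UC-violating tuple the partial unions `x_1 ∪ … ∪ x_j` start with `f = 1` (at `j = 1`)
and end with `f = 0` (at `j = k`), so at the first drop `(x_1 ∪ … ∪ x_{j-1}, x_j, x_1 ∪ … ∪ x_j)`
is a UC-violating triple. Its points lie in the augmentation of the tuple, so disjoint augmentations
give disjoint triples, and each partial union lies between `x_j` and `x_1 ∪ … ∪ x_k`, so its weight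
stays in any interval containing the weights of the tuple.
-/

theorem Fin.exists_castSucc_and_not_succ {m : ℕ} {P : Fin (m + 1) → Prop} (h0 : P 0)
    (hlast : ¬ P (Fin.last m)) : ∃ j : Fin m, P j.castSucc ∧ ¬ P j.succ := by
  by_contra! h
  exact hlast (Fin.induction h0 h (Fin.last m))

lemma wt_mono_s14 {n : ℕ} : Monotone (wt (n := n)) := fun _ _ hpq =>
  Finset.card_le_card (Finset.monotone_filter_right _ fun i _ => Bool.le_iff_imp.mp (hpq i))

section punion

variable {n k : ℕ} (x : Fin k → (Fin n → Bool))

lemma le_punion (j : Fin k) : x j ≤ punion x j := fun _ =>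
  Bool.le_iff_imp.mpr fun h => decide_eq_true ⟨j, le_rfl, h⟩

lemma punion_le_unionAll (j : Fin k) : punion x j ≤ unionAll x := fun _ =>
  Bool.le_iff_imp.mpr fun h => decide_eq_true (let ⟨j', _, h'⟩ := of_decide_eq_true h; ⟨j', h'⟩)

lemma wt_mem_of_mem_augmentation {a b : ℕ} (hwt : ∀ p ∈ tuplePoints x, wt p ∈ Set.Icc a b) :
    ∀ p ∈ augmentation x, wt p ∈ Set.Icc a b := by
  rintro p (hp | ⟨j, -, rfl⟩)
  · exact hwt p (Or.inl hp)
  · exact Set.ordConnected_Icc.out (hwt _ (Or.inl ⟨j, rfl⟩)) (hwt _ (Or.inr rfl))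
      ⟨wt_mono_s14 (le_punion x j), wt_mono_s14 (punion_le_unionAll x j)⟩

end punion

section succ

variable {n m : ℕ} (x : Fin (m + 1) → (Fin n → Bool))

lemma punion_zero : punion x 0 = x 0 := by
  funext i
  simp [punion]

lemma punion_last : punion x (Fin.last m) = unionAll x := by
  funext i
  simp [punion, unionAll, Fin.le_last]

lemma punion_succ (j : Fin m) : punion x j.succ = fun i => punion x j.castSucc i || x j.succ i := by
  funext i
  simp only [punion, le_iff_lt_or_eq (b := j.succ), ← Fin.le_castSucc_iff, or_and_right, exists_or,
    exists_eq_left, Bool.decide_or, Bool.decide_eq_true]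

lemma punion_mem_augmentation (j : Fin (m + 1)) : punion x j ∈ augmentation x := by
  rcases Fin.eq_zero_or_eq_succ j with rfl | ⟨j, rfl⟩
  · exact Or.inl ⟨0, (punion_zero x).symm⟩
  · exact Or.inr ⟨j.succ, by simp, rfl⟩

end succ

lemma IsUCTuple.exists_isUCTriple_subset_augmentation {n k : ℕ} {f : (Fin n → Bool) → Bool}
    {x : Fin k → (Fin n → Bool)} (hx : IsUCTuple f x) :
    ∃ t, IsUCTriple f t ∧ triplePoints t ⊆ augmentation x := by
  obtain ⟨hk, hf, hfunion⟩ := hx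
  obtain ⟨m, rfl⟩ := Nat.exists_eq_succ_of_ne_zero hk.ne'
  obtain ⟨j, hj, hj'⟩ := Fin.exists_castSucc_and_not_succ (P := fun j => f (punion x j) = true)
    (by simp [punion_zero, hf]) (by simp [punion_last, hfunion])
  refine ⟨(punion x j.castSucc, x j.succ, punion x j.succ),
    ⟨punion_succ x j, hj, hf _, by simpa using hj'⟩, ?_⟩
  rintro p (rfl | rfl | rfl)
  · exact punion_mem_augmentation x _
  · exact Or.inl ⟨_, rfl⟩
  · exact punion_mem_augmentation x _

/-- If `τ_1, …, τ_M` are UC-violating tuples for `f` whose augmentations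
are pairwise disjoint, then there exist `M` pairwise disjoint UC-violating triples for
`f`; moreover, if all points of every `τ_i` have Hamming weight in an interval
`[a, b] ⊆ [0, n]`, then so do all points of the `M` triples. -/
theorem disjoint_tuples_to_disjoint_triples (n M : ℕ) (f : (Fin n → Bool) → Bool)
    (kk : Fin M → ℕ) (xs : ∀ i, Fin (kk i) → (Fin n → Bool))
    (htuple : ∀ i, IsUCTuple f (xs i))
    (hdisj : ∀ i j, i ≠ j → Disjoint (augmentation (xs i)) (augmentation (xs j)))
    (a b : ℕ) (hwt : ∀ i, ∀ p ∈ tuplePoints (xs i), wt p ∈ Set.Icc a b) :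
    ∃ σ : Fin M → (Fin n → Bool) × (Fin n → Bool) × (Fin n → Bool),
      (∀ i, IsUCTriple f (σ i)) ∧
      (∀ i j, i ≠ j → Disjoint (triplePoints (σ i)) (triplePoints (σ j))) ∧
      (∀ i, ∀ p ∈ triplePoints (σ i), wt p ∈ Set.Icc a b) := by
  choose σ hσ hσaug using fun i => (htuple i).exists_isUCTriple_subset_augmentation
  exact ⟨σ, hσ, fun i j hij => (hdisj i j hij).mono (hσaug i) (hσaug j),
    fun i p hp => wt_mem_of_mem_augmentation (xs i) (hwt i) p (hσaug i hp)⟩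
end

section
/- Let f : {0,1}^n → {0,1} and ε > 0, and suppose dist_UC(f) > ε. Then there exists a collection of at least ε·2^n/(n+1) UC-violating tuples for f that are pairwise disjoint, meaning that no point of {0,1}^n appears in more than one tuple of the collection. -/
/-! ### Auxiliary material -/

/-- Finset version of the points of a tuple. -/
def ptsF {n k : ℕ} (x : Fin k → (Fin n → Bool)) : Finset (Fin n → Bool) :=
  Finset.image x Finset.univ ∪ {unionAll x}

lemma coe_ptsF {n k : ℕ} (x : Fin k → (Fin n → Bool)) :
    (ptsF x : Set (Fin n → Bool)) = tuplePoints x := by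
  simp [ptsF, tuplePoints]

lemma unionAll_mem_ptsF {n k : ℕ} (x : Fin k → (Fin n → Bool)) :
    unionAll x ∈ ptsF x := by simp [ptsF]

lemma apply_mem_ptsF {n k : ℕ} (x : Fin k → (Fin n → Bool)) (j : Fin k) :
    x j ∈ ptsF x := by simp [ptsF]

/-- From any UC-violating tuple one can extract one with at most `n+1` points,
whose points are among the points of the original tuple. -/
lemma reduce_tuple {n k : ℕ} (f : (Fin n → Bool) → Bool) (x : Fin k → (Fin n → Bool))
    (hx : IsUCTuple f x) :
    ∃ (m : ℕ) (y : Fin m → (Fin n → Bool)), IsUCTuple f y ∧ (ptsF y).card ≤ n + 1 ∧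
      ptsF y ⊆ ptsF x := by
  classical
  obtain ⟨hk, h1, h0⟩ := hx
  set u := unionAll x with hu
  set c : Fin n → Fin k := fun i =>
    if h : ∃ j, x j i = true then h.choose else ⟨0, hk⟩ with hc
  set I : Finset (Fin n) := Finset.univ.filter (fun i => u i = true) with hI
  set J : Finset (Fin k) := I.image c with hJ
  have hcspec : ∀ i ∈ I, x (c i) i = true := by
    intro i hi
    have : u i = true := by simpa [hI] using hi
    have hex : ∃ j, x j i = true := by simpa [hu, unionAll] using this
    simp only [hc, dif_pos hex]
    exact hex.choose_spec
  have hIne : I.Nonempty := by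
    by_contra hne
    have hIempty : ∀ i, u i = false := by
      intro i
      cases h : u i
      · rfl
      · exact absurd ⟨i, by simp [hI, h]⟩ hne
    have hx0 : x ⟨0, hk⟩ = u := by
      funext i
      cases h : x ⟨0, hk⟩ i
      · rw [hIempty i]
      · have hui : u i = true := by
          rw [hu]
          exact decide_eq_true ⟨_, h⟩
        rw [hIempty i] at hui
        exact absurd hui (by simp)
    have hone := h1 ⟨0, hk⟩
    rw [hx0, h0] at hone
    exact absurd hone (by simp)
  have hJne : J.Nonempty := hIne.image c
  set m := J.card with hm
  have hmpos : 0 < m := Finset.card_pos.mpr hJne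
  set e := J.equivFin with he
  set y : Fin m → (Fin n → Bool) := fun r => x ((e.symm r) : Fin k) with hy
  have hyu : unionAll y = u := by
    funext i
    rw [hu]
    simp only [unionAll]
    rw [decide_eq_decide]
    constructor
    · rintro ⟨r, hr⟩
      exact ⟨_, hr⟩
    · rintro ⟨j, hj⟩
      have hui : u i = true := by
        rw [hu]
        exact decide_eq_true ⟨j, hj⟩
      have hiI : i ∈ I := by simp [hI, hui]
      have hcmem : c i ∈ J := Finset.mem_image_of_mem c hiI
      refine ⟨e ⟨c i, hcmem⟩, ?_⟩
      simp only [hy, Equiv.symm_apply_apply]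
      exact hcspec i hiI
  refine ⟨m, y, ⟨hmpos, fun r => h1 _, by rw [hyu]; exact h0⟩, ?_, ?_⟩
  · calc (ptsF y).card ≤ (Finset.image y Finset.univ).card + ({unionAll y} : Finset _).card :=
          Finset.card_union_le _ _
      _ ≤ m + 1 := by
          gcongr
          · calc (Finset.image y Finset.univ).card ≤ (Finset.univ : Finset (Fin m)).card :=
                Finset.card_image_le
              _ = m := by simp
          · simp
      _ = J.card + 1 := rfl
      _ ≤ I.card + 1 := by gcongr; exact Finset.card_image_le
      _ ≤ n + 1 := by
          gcongr
          calc I.card ≤ (Finset.univ : Finset (Fin n)).card := Finset.card_filter_le _ _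
            _ = n := by simp
  · intro p hp
    simp only [ptsF, Finset.mem_union, Finset.mem_image, Finset.mem_singleton] at hp ⊢
    rcases hp with ⟨r, _, rfl⟩ | rfl
    · left; exact ⟨_, Finset.mem_univ _, rfl⟩
    · right; rw [hyu]

/-- Greedy extraction of a maximal collection of disjoint small violating tuples. -/
lemma greedy {n : ℕ} (f : (Fin n → Bool) → Bool) :
    ∀ N (S : Finset (Fin n → Bool)), S.card ≤ N →
    ∃ L : List (Σ k, Fin k → (Fin n → Bool)),
      (∀ t ∈ L, IsUCTuple f t.2 ∧ (ptsF t.2).card ≤ n + 1 ∧ ptsF t.2 ⊆ S) ∧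
      L.Pairwise (fun a b => Disjoint (ptsF a.2) (ptsF b.2)) ∧
      (∀ (k : ℕ) (x : Fin k → (Fin n → Bool)), IsUCTuple f x →
        ¬ (ptsF x ⊆ S \ L.foldr (fun t acc => ptsF t.2 ∪ acc) ∅)) := by
  classical
  intro N
  induction N with
  | zero =>
    intro S hS
    have hSe : S = ∅ := Finset.card_eq_zero.mp (Nat.le_zero.mp hS)
    refine ⟨[], by simp, by simp, ?_⟩
    intro k x hx hsub
    have := hsub (unionAll_mem_ptsF x)
    simp [hSe] at this
  | succ N ih =>
    intro S hS
    by_cases h : ∃ k, ∃ x : Fin k → (Fin n → Bool), IsUCTuple f x ∧ ptsF x ⊆ S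
    · obtain ⟨k, x, hx, hxS⟩ := h
      obtain ⟨m, y, hy, hycard, hysub⟩ := reduce_tuple f x hx
      have hyS : ptsF y ⊆ S := hysub.trans hxS
      set S' := S \ ptsF y with hS'
      have hS'card : S'.card ≤ N := by
        rw [hS', Finset.card_sdiff_of_subset hyS]
        have h2 : 1 ≤ (ptsF y).card :=
          Finset.card_pos.mpr ⟨_, unionAll_mem_ptsF y⟩
        omega
      obtain ⟨L', hL'1, hL'2, hL'3⟩ := ih S' hS'card
      refine ⟨⟨m, y⟩ :: L', ?_, ?_, ?_⟩
      · intro t ht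
        rcases List.mem_cons.mp ht with rfl | ht
        · exact ⟨hy, hycard, hyS⟩
        · obtain ⟨a, b, c⟩ := hL'1 t ht
          exact ⟨a, b, c.trans (Finset.sdiff_subset)⟩
      · refine List.Pairwise.cons ?_ hL'2
        intro t ht
        have hts : ptsF t.2 ⊆ S' := (hL'1 t ht).2.2
        rw [Finset.disjoint_left]
        intro a ha hat
        have := hts hat
        simp [hS'] at this
        exact this.2 ha
      · intro k' x' hx' hsub
        refine hL'3 k' x' hx' ?_
        intro a ha
        have := hsub ha
        simp only [List.foldr_cons, hS', Finset.mem_sdiff, Finset.mem_union, not_or] at this ⊢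
        tauto
    · refine ⟨[], by simp, by simp, ?_⟩
      intro k x hx hsub
      exact h ⟨k, x, hx, by simpa using hsub⟩

lemma foldr_card {n : ℕ} (L : List (Σ k, Fin k → (Fin n → Bool)))
    (h : ∀ t ∈ L, (ptsF t.2).card ≤ n + 1) :
    (L.foldr (fun t acc => ptsF t.2 ∪ acc) ∅).card ≤ L.length * (n + 1) := by
  classical
  induction L with
  | nil => simp
  | cons t L ih =>
    simp only [List.foldr_cons, List.length_cons]
    calc (ptsF t.2 ∪ L.foldr (fun t acc => ptsF t.2 ∪ acc) ∅).card
        ≤ (ptsF t.2).card + (L.foldr (fun t acc => ptsF t.2 ∪ acc) ∅).card :=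
          Finset.card_union_le _ _
      _ ≤ (n + 1) + L.length * (n + 1) := by
          gcongr
          · exact h t (by simp)
          · exact ih (fun t' ht' => h t' (by simp [ht']))
      _ = (L.length + 1) * (n + 1) := by ring

/-- If `dist_UC(f) > ε` then there is a collection of at least
`ε·2^n/(n+1)` UC-violating tuples for `f` that are pairwise disjoint (no point of
`{0,1}^n` appears in more than one tuple of the collection). -/
theorem many_disjoint_violating_tuples (n : ℕ) (f : (Fin n → Bool) → Bool)
    (ε : ℝ) (hε : 0 < ε) (hdist : ε < distUC f) :
    ∃ (M : ℕ) (kk : Fin M → ℕ) (xs : ∀ i, Fin (kk i) → (Fin n → Bool)),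
      ε * 2 ^ n / ((n : ℝ) + 1) ≤ (M : ℝ) ∧
      (∀ i, IsUCTuple f (xs i)) ∧
      (∀ i j, i ≠ j → Disjoint (tuplePoints (xs i)) (tuplePoints (xs j))) := by
  classical
  obtain ⟨L, hL1, hL2, hL3⟩ := greedy f (2 ^ n) Finset.univ (by
    simp [Finset.card_univ])
  set R := L.foldr (fun t acc => ptsF t.2 ∪ acc) ∅ with hR
  have hRcard : R.card ≤ L.length * (n + 1) := foldr_card L (fun t ht => (hL1 t ht).2.1)
  -- every violating tuple has a point in R
  have hmax : ∀ (k : ℕ) (x : Fin k → (Fin n → Bool)), IsUCTuple f x →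
      ∃ p ∈ ptsF x, p ∈ R := by
    intro k x hx
    by_contra hcon
    push_neg at hcon
    exact hL3 k x hx (fun a ha => by simp [Finset.mem_sdiff]; exact hcon a ha)
  -- the union-closure of the 1-points of f outside R
  obtain ⟨g, hgiff⟩ : ∃ g : (Fin n → Bool) → Bool, ∀ z, g z = true ↔
      (∃ (T : Finset (Fin n → Bool)), T.Nonempty ∧ (∀ y ∈ T, f y = true ∧ y ∉ R) ∧
        ∀ i, (z i = true ↔ ∃ y ∈ T, y i = true)) :=
    ⟨fun z => decide (∃ (T : Finset (Fin n → Bool)), T.Nonempty ∧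
        (∀ y ∈ T, f y = true ∧ y ∉ R) ∧ ∀ i, (z i = true ↔ ∃ y ∈ T, y i = true)),
      fun z => by simp⟩
  have hguc : IsUnionClosed g := by
    intro a b ha hb
    obtain ⟨T₁, hT₁ne, hT₁p, hT₁i⟩ := (hgiff a).mp ha
    obtain ⟨T₂, hT₂ne, hT₂p, hT₂i⟩ := (hgiff b).mp hb
    refine (hgiff _).mpr ⟨T₁ ∪ T₂, hT₁ne.mono Finset.subset_union_left, ?_, ?_⟩
    · intro y hy
      rcases Finset.mem_union.mp hy with hy | hy
      · exact hT₁p y hy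
      · exact hT₂p y hy
    · intro i
      simp only [Bool.or_eq_true, hT₁i i, hT₂i i, Finset.mem_union]
      constructor
      · rintro (⟨y, hy, hyi⟩ | ⟨y, hy, hyi⟩)
        · exact ⟨y, Or.inl hy, hyi⟩
        · exact ⟨y, Or.inr hy, hyi⟩
      · rintro ⟨y, hy | hy, hyi⟩
        · exact Or.inl ⟨y, hy, hyi⟩
        · exact Or.inr ⟨y, hy, hyi⟩
  -- all disagreements between f and g are in R
  have hdisag : ∀ z, f z ≠ g z → z ∈ R := by
    intro z hz
    by_contra hzR
    cases hfz : f z with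
    | true =>
      have : g z = true := by
        refine (hgiff z).mpr ⟨{z}, ⟨z, by simp⟩, ?_, ?_⟩
        · intro y hy
          rw [Finset.mem_singleton] at hy
          subst hy; exact ⟨hfz, hzR⟩
        · intro i; simp
      rw [hfz, this] at hz; exact hz rfl
    | false =>
      have hgz : g z = true := by
        cases hgz : g z
        · exact (hz (hfz.trans hgz.symm)).elim
        · rfl
      obtain ⟨T, hTne, hTp, hTi⟩ := (hgiff z).mp hgz
      set m := T.card with hm
      have hmpos : 0 < m := Finset.card_pos.mpr hTne
      set e := T.equivFin with he
      set y : Fin m → (Fin n → Bool) := fun r => ((e.symm r : T) : Fin n → Bool) with hy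
      have hymem : ∀ r, (y r) ∈ T := fun r => (e.symm r).2
      have hyu : unionAll y = z := by
        funext i
        have key : (∃ r, y r i = true) ↔ z i = true := by
          rw [hTi i]
          constructor
          · rintro ⟨r, hr⟩; exact ⟨y r, hymem r, hr⟩
          · rintro ⟨w, hw, hwi⟩
            exact ⟨e ⟨w, hw⟩, by simp [hy, Equiv.symm_apply_apply]; exact hwi⟩
        cases h : z i
        · simp only [unionAll]
          apply decide_eq_false
          intro hex
          have := key.mp hex
          rw [h] at this; exact absurd this (by simp)
        · simp only [unionAll]
          exact decide_eq_true (key.mpr h)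
      have htup : IsUCTuple f y :=
        ⟨hmpos, fun r => (hTp _ (hymem r)).1, by rw [hyu]; exact hfz⟩
      obtain ⟨p, hp, hpR⟩ := hmax m y htup
      simp only [ptsF, Finset.mem_union, Finset.mem_image, Finset.mem_singleton] at hp
      rcases hp with ⟨r, _, rfl⟩ | rfl
      · exact (hTp _ (hymem r)).2 hpR
      · rw [hyu] at hpR; exact hzR hpR
  -- distance bound
  have h2n : (0 : ℝ) < 2 ^ n := by positivity
  have hsub : (Finset.univ.filter (fun z => f z ≠ g z)) ⊆ R := by
    intro z hz
    exact hdisag z (Finset.mem_filter.mp hz).2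
  have hham : hamDist f g ≤ ((L.length * (n + 1) : ℕ) : ℝ) / 2 ^ n := by
    unfold hamDist
    gcongr
    exact_mod_cast le_trans (Finset.card_le_card hsub) hRcard
  have hduc : distUC f ≤ hamDist f g := by
    apply csInf_le
    · refine ⟨0, ?_⟩
      rintro r ⟨g', _, rfl⟩
      unfold hamDist
      positivity
    · exact ⟨g, hguc, rfl⟩
  have hkey : ε < (L.length * (n + 1) : ℕ) / 2 ^ n :=
    lt_of_lt_of_le hdist (hduc.trans hham)
  have hn1 : (0 : ℝ) < (n : ℝ) + 1 := by positivity
  refine ⟨L.length, fun i => (L.get i).1, fun i => (L.get i).2, ?_, ?_, ?_⟩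
  · rw [div_le_iff₀ hn1]
    have : ε * 2 ^ n < (L.length * (n + 1) : ℕ) := (lt_div_iff₀ h2n).mp hkey
    have hcast : ((L.length * (n + 1) : ℕ) : ℝ) = (L.length : ℝ) * ((n : ℝ) + 1) := by
      push_cast; ring
    rw [hcast] at this
    linarith
  · intro i
    exact (hL1 (L.get i) (L.get_mem i)).1
  · intro i j hij
    have hpw := List.pairwise_iff_get.mp hL2
    have key : ∀ (a b : Fin L.length), a < b →
        Disjoint (tuplePoints (L.get a).2) (tuplePoints (L.get b).2) := by
      intro a b hab
      rw [← coe_ptsF, ← coe_ptsF]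
      exact Finset.disjoint_coe.mpr (hpw a b hab)
    rcases lt_or_gt_of_ne hij with h | h
    · exact key i j h
    · exact (key j i h).symm
end

section
/- Let f : {0,1}^n → {0,1} and ε > 0, and suppose dist_UC(f) > ε. Then f has at least ε·2^n/(n+1) pairwise distinct UC-violating triples. -/
/-- If `dist_UC(f) > ε` then `f` has at least `ε·2^n/(n+1)` pairwise
distinct UC-violating triples. -/
theorem many_violating_triples (n : ℕ) (f : (Fin n → Bool) → Bool)
    (ε : ℝ) (hε : 0 < ε) (hdist : ε < distUC f) :
    ∃ S : Finset ((Fin n → Bool) × (Fin n → Bool) × (Fin n → Bool)),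
      ε * 2 ^ n / ((n : ℝ) + 1) ≤ (S.card : ℝ) ∧ ∀ t ∈ S, IsUCTriple f t := by
  classical
  set P : (Fin n → Bool) → Prop :=
    fun u => f u = true ∧ ∃ z, f z = true ∧ f (fun i => u i || z i) = false with hPdef
  set bad : Finset (Fin n → Bool) := Finset.univ.filter P with hbad
  set g : (Fin n → Bool) → Bool := fun x => decide (f x = true ∧ ¬ P x) with hgdef
  have hg : IsUnionClosed g := by
    intro x y hx hy
    simp only [hgdef, decide_eq_true_eq] at hx hy ⊢
    obtain ⟨hfx, hbx⟩ := hx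
    obtain ⟨hfy, hby⟩ := hy
    have hfxy : f (fun i => x i || y i) = true := by
      by_contra h
      exact hbx ⟨hfx, y, hfy, Bool.eq_false_iff.mpr h⟩
    refine ⟨hfxy, ?_⟩
    rintro ⟨-, z, hz, hzz⟩
    have hyz : f (fun i => y i || z i) = true := by
      by_contra h
      exact hby ⟨hfy, z, hz, Bool.eq_false_iff.mpr h⟩
    apply hbx
    refine ⟨hfx, (fun i => y i || z i), hyz, ?_⟩
    have : (fun i => x i || (y i || z i)) = (fun i => (x i || y i) || z i) := by
      funext i; exact (Bool.or_assoc _ _ _).symm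
    rw [this]; exact hzz
  have hfilter : Finset.univ.filter (fun x => f x ≠ g x) = bad := by
    ext x
    simp only [hbad, Finset.mem_filter, Finset.mem_univ, true_and]
    constructor
    · intro hne
      by_contra hpx
      apply hne
      cases hfx : f x
      · simp [hgdef, hfx]
      · simp [hgdef, hfx, hpx]
    · intro hpx
      have hfx : f x = true := hpx.1
      simp only [hgdef, hfx, ne_eq, decide_eq_true_eq]
      intro h
      exact (of_decide_eq_true h.symm).2 hpx
  have hdle : distUC f ≤ hamDist f g := by
    apply csInf_le
    · refine ⟨0, ?_⟩
      rintro r ⟨g', -, rfl⟩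
      unfold hamDist
      positivity
    · exact ⟨g, hg, rfl⟩
  have h2 : (0:ℝ) < 2 ^ n := by positivity
  have hcard : ε * 2 ^ n < (bad.card : ℝ) := by
    have : ε < (bad.card : ℝ) / 2 ^ n := by
      have := lt_of_lt_of_le hdist hdle
      rwa [hamDist, hfilter] at this
    calc ε * 2 ^ n < ((bad.card : ℝ) / 2 ^ n) * 2 ^ n := by
          exact (mul_lt_mul_iff_of_pos_right h2).mpr this
      _ = (bad.card : ℝ) := by field_simp
  set zfun : (Fin n → Bool) → (Fin n → Bool) := fun u =>
    if h : ∃ z, f z = true ∧ f (fun i => u i || z i) = false then h.choose else u with hzfun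
  set tmap : (Fin n → Bool) → (Fin n → Bool) × (Fin n → Bool) × (Fin n → Bool) :=
    fun u => (u, zfun u, fun i => u i || zfun u i) with htmap
  refine ⟨bad.image tmap, ?_, ?_⟩
  · have hinj : Function.Injective tmap := by
      intro a b hab
      exact congrArg Prod.fst hab
    rw [Finset.card_image_of_injective _ hinj]
    have hle : ε * 2 ^ n / ((n : ℝ) + 1) ≤ ε * 2 ^ n := by
      apply div_le_self (by positivity)
      have : (0:ℝ) ≤ (n:ℝ) := Nat.cast_nonneg n
      linarith
    linarith
  · intro t ht
    obtain ⟨u, hu, rfl⟩ := Finset.mem_image.mp ht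
    have hpu : P u := (Finset.mem_filter.mp hu).2
    obtain ⟨hfu, hex⟩ := hpu
    have hz : f (hex.choose) = true ∧ f (fun i => u i || hex.choose i) = false :=
      hex.choose_spec
    have hzeq : zfun u = hex.choose := by
      simp only [hzfun, dif_pos hex]
    refine ⟨rfl, hfu, ?_, ?_⟩
    · simpa [htmap, hzeq] using hz.1
    · simpa [htmap, hzeq] using hz.2
end
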